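/- arXiv:1809.01672 — 5 statements merged into one kernel-verified Lean document; each statement's English description precedes it below -/
import Mathlib

section
/- Let F be a closed convex subset of density matrices on ℂ^d containing at least one state, and ρ ∉ F a density matrix. Then there exists a positive semidefinite Hermitian matrix X with Tr(ρX) > 1 and 0 ≤ Tr(σX) ≤ 1 for all σ ∈ F. -/
open Matrix ComplexOrder

-- representation of a real-linear functional
lemma rep_functional {d : ℕ} (f : Matrix (Fin d) (Fin d) ℂ →L[ℝ] ℝ) :
    ∃ Y : Matrix (Fin d) (Fin d) ℂ, ∀ A, ((A * Y).trace).re = f A := by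
  refine ⟨Matrix.of fun j i => (f (Matrix.single i j 1) : ℂ) -
      Complex.I * (f (Matrix.single i j Complex.I) : ℂ), fun A => ?_⟩
  have hA : A = ∑ i : Fin d, ∑ j : Fin d, Matrix.single i j (A i j) :=
    matrix_eq_sum_single A
  conv_rhs => rw [hA]
  simp only [map_sum]
  have htr : (A * Matrix.of fun j i => (f (Matrix.single i j 1) : ℂ) -
      Complex.I * (f (Matrix.single i j Complex.I) : ℂ)).trace
      = ∑ i : Fin d, ∑ j : Fin d, A i j * ((f (Matrix.single i j 1) : ℂ) -
      Complex.I * (f (Matrix.single i j Complex.I) : ℂ)) := by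
    simp [Matrix.trace, Matrix.mul_apply, Matrix.diag]
  rw [htr]
  simp only [Complex.re_sum]
  refine Finset.sum_congr rfl fun i _ => Finset.sum_congr rfl fun j _ => ?_
  have hsb : Matrix.single i j (A i j)
      = (A i j).re • Matrix.single i j (1:ℂ) + (A i j).im • Matrix.single i j Complex.I := by
    ext p q
    simp only [Matrix.single, Matrix.of_apply, Matrix.add_apply, Matrix.smul_apply,
      Complex.real_smul]
    split_ifs with h
    · rw [mul_one]; exact (Complex.re_add_im _).symm
    · simp
  rw [hsb, map_add, f.map_smul, f.map_smul, smul_eq_mul, smul_eq_mul]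
  simp [Complex.mul_re]

lemma herm_trace_conj {d : ℕ} {A Y : Matrix (Fin d) (Fin d) ℂ} (hA : A.IsHermitian) :
    (A * Yᴴ).trace = star ((A * Y).trace) := by
  rw [← Matrix.trace_conjTranspose, Matrix.conjTranspose_mul, hA.eq, Matrix.trace_mul_comm]

lemma trace_mul_psd_re_nonneg {d : ℕ} {A X : Matrix (Fin d) (Fin d) ℂ}
    (hA : A.PosSemidef) (hX : X.PosSemidef) : 0 ≤ ((A * X).trace).re := by
  obtain ⟨B, rfl⟩ : ∃ B : Matrix (Fin d) (Fin d) ℂ, A = Bᴴ * B := by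
    open scoped MatrixOrder Matrix.Norms.L2Operator in
    exact CStarAlgebra.nonneg_iff_eq_star_mul_self.mp hA.nonneg
  have hM : (B * X * Bᴴ).PosSemidef := hX.mul_mul_conjTranspose_same B
  have htr : (Bᴴ * B * X).trace = (B * X * Bᴴ).trace := by
    rw [Matrix.trace_mul_cycle, Matrix.trace_mul_cycle]
  have hnn : (0:ℂ) ≤ (B * X * Bᴴ).trace := by
    refine Finset.sum_nonneg fun i _ => ?_
    have h := hM.dotProduct_mulVec_nonneg (Pi.single i 1)
    simpa [Matrix.mulVec, dotProduct, Pi.single_apply, apply_ite,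
      Finset.sum_ite_eq', mul_comm] using h
  rw [htr]
  exact ((Complex.le_def).mp hnn).1

lemma psd_shift {d : ℕ} {W : Matrix (Fin d) (Fin d) ℂ} (hW : W.IsHermitian) {lam : ℝ}
    (hlam : ∑ i, ∑ j, ‖W i j‖ ≤ lam) :
    (((lam : ℝ) : ℂ) • (1 : Matrix (Fin d) (Fin d) ℂ) + W).PosSemidef := by
  set t := ∑ i, ∑ j, ‖W i j‖ with ht
  have ht0 : 0 ≤ t := Finset.sum_nonneg fun i _ => Finset.sum_nonneg fun j _ => by positivity
  rw [Matrix.posSemidef_iff_dotProduct_mulVec]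
  constructor
  · have h1 : (((lam : ℝ) : ℂ) • (1 : Matrix (Fin d) (Fin d) ℂ)).IsHermitian := by
      unfold Matrix.IsHermitian
      rw [Matrix.conjTranspose_smul, Matrix.conjTranspose_one, Complex.star_def,
        Complex.conj_ofReal]
    exact h1.add hW
  · intro x
    set N : ℝ := ∑ k, Complex.normSq (x k) with hN
    have hN0 : 0 ≤ N := Finset.sum_nonneg fun k _ => Complex.normSq_nonneg _
    have hsx : dotProduct (star x) x = (N : ℂ) := by
      rw [hN]
      push_cast
      refine Finset.sum_congr rfl fun k _ => ?_
      simp [Complex.normSq_eq_conj_mul_self]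
    set s := dotProduct (star x) (W *ᵥ x) with hsdef
    have key : dotProduct (star x) ((((lam : ℝ) : ℂ) • 1 + W) *ᵥ x)
        = (lam : ℂ) * (N : ℂ) + s := by
      rw [Matrix.add_mulVec, dotProduct_add, Matrix.smul_mulVec,
        Matrix.one_mulVec, dotProduct_smul, smul_eq_mul, hsx]
    have hs_sum : s = ∑ i, ∑ j, star (x i) * (W i j * x j) := by
      simp [hsdef, dotProduct, Matrix.mulVec, Finset.mul_sum]
    have hs_star : star s = s := by
      rw [hs_sum]
      simp only [star_sum, star_mul', star_star, hW.apply]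
      rw [Finset.sum_comm]
      exact Finset.sum_congr rfl fun j _ => Finset.sum_congr rfl fun i _ => by ring
    have hs_im : s.im = 0 := by
      have h := congrArg Complex.im hs_star
      simp at h
      linarith
    have habs : ‖s‖ ≤ t * N := by
      rw [hs_sum]
      refine le_trans (norm_sum_le _ _) ?_
      refine le_trans (Finset.sum_le_sum fun i _ => norm_sum_le _ _) ?_
      rw [ht, Finset.sum_mul]
      refine Finset.sum_le_sum fun i _ => ?_
      rw [Finset.sum_mul]
      refine Finset.sum_le_sum fun j _ => ?_
      rw [norm_mul, norm_mul]
      have hxij : ‖x i‖ * ‖x j‖ ≤ N := by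
        have h1 : Complex.normSq (x i) ≤ N :=
          Finset.single_le_sum (fun k _ => Complex.normSq_nonneg (x k)) (Finset.mem_univ i)
        have h2 : Complex.normSq (x j) ≤ N :=
          Finset.single_le_sum (fun k _ => Complex.normSq_nonneg (x k)) (Finset.mem_univ j)
        have e1 : ‖x i‖ ^ 2 = Complex.normSq (x i) := Complex.sq_norm _
        have e2 : ‖x j‖ ^ 2 = Complex.normSq (x j) := Complex.sq_norm _
        nlinarith [norm_nonneg (x i), norm_nonneg (x j),
          sq_nonneg (‖x i‖ - ‖x j‖)]
      calc ‖star (x i)‖ * (‖W i j‖ * ‖x j‖)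
          = ‖W i j‖ * (‖x i‖ * ‖x j‖) := by
            rw [show star (x i) = (starRingEnd ℂ) (x i) from rfl, Complex.norm_conj]; ring
        _ ≤ ‖W i j‖ * N :=
            mul_le_mul_of_nonneg_left hxij (norm_nonneg _)
    have hre : 0 ≤ lam * N + s.re := by
      have h2 : t * N ≤ lam * N := mul_le_mul_of_nonneg_right hlam hN0
      have h4 := Complex.abs_re_le_norm s
      have h5 := neg_abs_le s.re
      linarith
    rw [key, Complex.le_def]
    constructor
    · simpa [Complex.add_re, Complex.mul_re] using hre
    · simp [Complex.add_im, Complex.mul_im, hs_im]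

def IsDensityMatrix {d : ℕ} (ρ : Matrix (Fin d) (Fin d) ℂ) : Prop :=
  ρ.PosSemidef ∧ ρ.trace = 1

/-- From a separating witness one obtains a positive semidefinite operator `X`
with `Tr(ρX) > 1` while `0 ≤ Tr(σX) ≤ 1` on all free states. -/
theorem positive_witness_exists {d : ℕ} (F : Set (Matrix (Fin d) (Fin d) ℂ))
    (hF_sub : ∀ σ ∈ F, IsDensityMatrix σ)
    (hF_closed : IsClosed F) (hF_conv : Convex ℝ F) (hF_ne : F.Nonempty)
    (ρ : Matrix (Fin d) (Fin d) ℂ) (hρ : IsDensityMatrix ρ) (hρF : ρ ∉ F) :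
    ∃ X : Matrix (Fin d) (Fin d) ℂ, X.PosSemidef ∧
      1 < (ρ * X).trace.re ∧
      ∀ σ ∈ F, 0 ≤ (σ * X).trace.re ∧ (σ * X).trace.re ≤ 1 := by
  haveI : LocallyConvexSpace ℝ (Matrix (Fin d) (Fin d) ℂ) :=
    (by infer_instance : LocallyConvexSpace ℝ (Fin d → Fin d → ℂ))
  obtain ⟨f, u, hu1, hu2⟩ := geometric_hahn_banach_closed_point hF_conv hF_closed hρF
  obtain ⟨Y, hY⟩ := rep_functional f
  set W := Y + Yᴴ with hWdef
  have hW : W.IsHermitian := by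
    unfold Matrix.IsHermitian
    rw [hWdef, Matrix.conjTranspose_add, Matrix.conjTranspose_conjTranspose, add_comm]
  have hg : ∀ A : Matrix (Fin d) (Fin d) ℂ, A.IsHermitian → ((A * W).trace).re = 2 * f A := by
    intro A hA
    rw [hWdef, mul_add, Matrix.trace_add, Complex.add_re, herm_trace_conj hA]
    rw [show (star ((A * Y).trace)).re = ((A * Y).trace).re from Complex.conj_re _]
    rw [hY A]; ring
  set t := ∑ i, ∑ j, ‖W i j‖ with ht
  have ht0 : 0 ≤ t := Finset.sum_nonneg fun i _ => Finset.sum_nonneg fun j _ => by positivity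
  set lam := max t (1 - 2 * u) with hlamdef
  have hlam_t : t ≤ lam := le_max_left _ _
  set c := lam + 2 * u with hcdef
  have hc1 : (1:ℝ) ≤ c := by
    have := le_max_right t (1 - 2 * u)
    simp only [hcdef, hlamdef]
    linarith
  have hc0 : (0:ℝ) < c := by linarith
  set M := ((lam : ℝ) : ℂ) • (1 : Matrix (Fin d) (Fin d) ℂ) + W with hMdef
  have hM : M.PosSemidef := psd_shift hW hlam_t
  refine ⟨((c⁻¹ : ℝ) : ℂ) • M, ?_, ?_, ?_⟩
  case _ =>
    rw [Matrix.posSemidef_iff_dotProduct_mulVec]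
    constructor
    · unfold Matrix.IsHermitian
      rw [Matrix.conjTranspose_smul, Complex.star_def, Complex.conj_ofReal, hM.1.eq]
    · intro x
      rw [Matrix.smul_mulVec, dotProduct_smul, smul_eq_mul]
      refine mul_nonneg ?_ (hM.dotProduct_mulVec_nonneg x)
      rw [Complex.le_def]
      constructor
      · simpa using (inv_nonneg.mpr hc0.le)
      · simp
  case _ =>
    have htr : (ρ * (((c⁻¹ : ℝ) : ℂ) • M)).trace.re = c⁻¹ * (lam + ((ρ * W).trace).re) := by
      rw [mul_smul_comm, Matrix.trace_smul, hMdef, mul_add, Matrix.trace_add,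
        mul_smul_comm, mul_one, Matrix.trace_smul, hρ.2]
      simp [Complex.add_re, Complex.mul_re, Complex.ofReal_re, Complex.ofReal_im]
    rw [htr, hg ρ hρ.1.1]
    have hlt : c < lam + 2 * f ρ := by
      rw [hcdef]; linarith
    have := mul_lt_mul_of_pos_left hlt (inv_pos.mpr hc0)
    rwa [inv_mul_cancel₀ hc0.ne'] at this
  case _ =>
    intro σ hσ
    obtain ⟨hσpsd, hσtr⟩ := hF_sub σ hσ
    have htr : (σ * (((c⁻¹ : ℝ) : ℂ) • M)).trace.re = c⁻¹ * (lam + ((σ * W).trace).re) := by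
      rw [mul_smul_comm, Matrix.trace_smul, hMdef, mul_add, Matrix.trace_add,
        mul_smul_comm, mul_one, Matrix.trace_smul, hσtr]
      simp [Complex.add_re, Complex.mul_re, Complex.ofReal_re, Complex.ofReal_im]
    constructor
    · have hXpsd : (((c⁻¹ : ℝ) : ℂ) • M).PosSemidef := by
        rw [Matrix.posSemidef_iff_dotProduct_mulVec]
        constructor
        · unfold Matrix.IsHermitian
          rw [Matrix.conjTranspose_smul, Complex.star_def, Complex.conj_ofReal, hM.1.eq]
        · intro x
          rw [Matrix.smul_mulVec, dotProduct_smul, smul_eq_mul]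
          refine mul_nonneg ?_ (hM.dotProduct_mulVec_nonneg x)
          rw [Complex.le_def]
          constructor
          · simpa using (inv_nonneg.mpr hc0.le)
          · simp
      exact trace_mul_psd_re_nonneg hσpsd hXpsd
    · rw [htr, hg σ hσpsd.1]
      have hlt : lam + 2 * f σ < c := by
        rw [hcdef]
        have := hu1 σ hσ
        linarith
      have h1 := mul_le_mul_of_nonneg_left hlt.le (inv_nonneg.mpr hc0.le)
      rw [inv_mul_cancel₀ hc0.ne'] at h1
      exact h1
end

section
/- Let F be a closed convex set of density matrices on ℂ^d and ρ a density matrix not in F. Then there exist two quantum channels Λ₀, Λ₁ from d×d matrices to 2×2 matrices such that ‖Λ₀(ρ) − Λ₁(ρ)‖₁ > ‖Λ₀(σ) − Λ₁(σ)‖₁ for every σ ∈ F. -/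
open Matrix ComplexOrder

def choi {d m : ℕ} (Φ : Matrix (Fin d) (Fin d) ℂ → Matrix (Fin m) (Fin m) ℂ) :
    Matrix (Fin m × Fin d) (Fin m × Fin d) ℂ :=
  fun p q => Φ (Matrix.single p.2 q.2 1) p.1 q.1

/-- A quantum channel: linear, completely positive (PSD Choi matrix), trace preserving. -/
def IsQuantumChannel {d m : ℕ}
    (Φ : Matrix (Fin d) (Fin d) ℂ → Matrix (Fin m) (Fin m) ℂ) : Prop :=
  IsLinearMap ℂ Φ ∧ (choi Φ).PosSemidef ∧ ∀ η, (Φ η).trace = η.trace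

/-- The square root of a positive semidefinite matrix, as `Matrix.PosSemidef.sqrt` was defined
in Mathlib of December 2024 (removed since). -/
noncomputable def Matrix.PosSemidef.sqrt {n : Type*} [Fintype n] [DecidableEq n]
    {A : Matrix n n ℂ} (hA : A.PosSemidef) : Matrix n n ℂ :=
  hA.1.eigenvectorUnitary.1 * diagonal ((↑) ∘ Real.sqrt ∘ hA.1.eigenvalues) *
    (star hA.1.eigenvectorUnitary : Matrix n n ℂ)

noncomputable def traceNorm {d : ℕ} (A : Matrix (Fin d) (Fin d) ℂ) : ℝ :=
  ((Matrix.posSemidef_conjTranspose_mul_self A).sqrt.trace).re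

/- ---------------------------------------------------------------------------
Auxiliary material
--------------------------------------------------------------------------- -/

instance matrixLocallyConvex {d : ℕ} : LocallyConvexSpace ℝ (Matrix (Fin d) (Fin d) ℂ) :=
  inferInstanceAs (LocallyConvexSpace ℝ (Fin d → Fin d → ℂ))

section Aux
variable {d : ℕ}

lemma trace_mul_eq (M N : Matrix (Fin d) (Fin d) ℂ) :
    (M * N).trace = ∑ k, ∑ l, M k l * N l k := by
  simp [Matrix.trace, Matrix.diag, Matrix.mul_apply]

lemma trace_mul_std (E : Matrix (Fin d) (Fin d) ℂ) (k l : Fin d) :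
    (E * Matrix.single k l 1).trace = E l k := by
  simp [trace_mul_eq, Matrix.single, Matrix.of_apply, mul_ite, ite_and]

lemma trace_std (k l : Fin d) :
    (Matrix.single k l (1:ℂ)).trace = if k = l then 1 else 0 := by
  by_cases h : k = l
  · subst h; simp
  · rw [if_neg h]; exact Matrix.trace_single_eq_of_ne _ _ _ h

/-- The binary measurement channel associated to an effect `E`. -/
noncomputable def meas (E : Matrix (Fin d) (Fin d) ℂ)
    (X : Matrix (Fin d) (Fin d) ℂ) : Matrix (Fin 2) (Fin 2) ℂ :=
  Matrix.diagonal ![(E * X).trace, X.trace - (E * X).trace]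

lemma meas_linear (E : Matrix (Fin d) (Fin d) ℂ) : IsLinearMap ℂ (meas E) := by
  constructor
  · intro X Y
    ext i j
    fin_cases i <;> fin_cases j <;>
      (simp [meas, Matrix.diagonal_apply, mul_add, trace_add]; try ring)
  · intro c X
    ext i j
    fin_cases i <;> fin_cases j <;>
      (simp [meas, Matrix.diagonal_apply, Matrix.mul_smul, trace_smul]; try ring)

lemma meas_trace (E : Matrix (Fin d) (Fin d) ℂ) (X : Matrix (Fin d) (Fin d) ℂ) :
    (meas E X).trace = X.trace := by
  simp [meas, Matrix.trace_diagonal, Fin.sum_univ_two]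

lemma choi_meas_apply (E : Matrix (Fin d) (Fin d) ℂ) (p q : Fin 2 × Fin d) :
    choi (meas E) p q =
      if p.1 = q.1 then
        (if p.1 = 0 then E q.2 p.2
         else (if p.2 = q.2 then (1:ℂ) else 0) - E q.2 p.2)
      else 0 := by
  obtain ⟨i, k⟩ := p
  obtain ⟨j, l⟩ := q
  fin_cases i <;> fin_cases j <;>
    simp [choi, meas, Matrix.diagonal_apply, trace_mul_std, trace_std]

lemma choi_meas_posSemidef {E : Matrix (Fin d) (Fin d) ℂ}
    (hE : E.PosSemidef) (hIE : ((1:Matrix (Fin d) (Fin d) ℂ) - E).PosSemidef) :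
    (choi (meas E)).PosSemidef := by
  refine Matrix.PosSemidef.of_dotProduct_mulVec_nonneg ?_ ?_
  · apply Matrix.IsHermitian.ext
    rintro ⟨i, k⟩ ⟨j, l⟩
    fin_cases i <;> fin_cases j <;>
      simp [choi_meas_apply, hE.1.apply, apply_ite (star : ℂ → ℂ), eq_comm]
  · intro x
    have key : star x ⬝ᵥ (choi (meas E) *ᵥ x) =
        star (fun k => x (0,k)) ⬝ᵥ (Eᵀ *ᵥ fun k => x (0,k))
        + star (fun k => x (1,k)) ⬝ᵥ ((1 - Eᵀ) *ᵥ fun k => x (1,k)) := by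
      simp [dotProduct, mulVec, Fintype.sum_prod_type, Fin.sum_univ_two, choi_meas_apply,
        Matrix.transpose_apply, Matrix.sub_apply, Matrix.one_apply, Finset.mul_sum]
    rw [key]
    have h2 : ((1:Matrix (Fin d) (Fin d) ℂ) - E)ᵀ = 1 - Eᵀ := by
      simp [Matrix.transpose_sub]
    exact add_nonneg (hE.transpose.dotProduct_mulVec_nonneg _) (by simpa [h2] using hIE.transpose.dotProduct_mulVec_nonneg _)

lemma traceNorm_diag_pm (t : ℝ) :
    traceNorm (Matrix.diagonal ![(t:ℂ), -t]) = 2 * |t| := by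
  set A : Matrix (Fin 2) (Fin 2) ℂ := Matrix.diagonal ![(t:ℂ), -t] with hA
  have hsq : (Matrix.diagonal ![((|t| : ℝ) : ℂ), ((|t| : ℝ) : ℂ)]) ^ 2 = Aᴴ * A := by
    rw [pow_two, hA, Matrix.diagonal_conjTranspose, Matrix.diagonal_mul_diagonal,
      Matrix.diagonal_mul_diagonal]
    apply Matrix.ext
    intro i j
    fin_cases i <;> fin_cases j <;>
      simp [Matrix.diagonal_apply, Complex.conj_ofReal, ← Complex.ofReal_mul,
        abs_mul_abs_self, neg_mul_neg]
  have hB : (Matrix.diagonal ![((|t| : ℝ) : ℂ), ((|t| : ℝ) : ℂ)]).PosSemidef := by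
    apply Matrix.PosSemidef.diagonal
    intro i
    fin_cases i <;> simpa using Complex.zero_le_real.2 (abs_nonneg t)
  have hP := Matrix.posSemidef_conjTranspose_mul_self A
  have hM : Aᴴ * A = (((t^2:ℝ)):ℂ) • (1 : Matrix (Fin 2) (Fin 2) ℂ) := by
    rw [← hsq]
    ext i j
    fin_cases i <;> fin_cases j <;>
      simp [pow_two, Matrix.diagonal_apply, ← Complex.ofReal_mul, abs_mul_abs_self]
  have hmv : ∀ v : Fin 2 → ℂ, (Aᴴ * A) *ᵥ v = (((t^2:ℝ)):ℂ) • v := by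
    intro v; rw [hM, Matrix.smul_mulVec, Matrix.one_mulVec]
  have hev : ∀ i, hP.1.eigenvalues i = t^2 := by
    intro i
    rw [hP.1.eigenvalues_eq i, hmv, dotProduct_smul]
    have hvv : star ⇑(hP.1.eigenvectorBasis i) ⬝ᵥ ⇑(hP.1.eigenvectorBasis i) = 1 := by
      rw [dotProduct_comm, ← EuclideanSpace.inner_eq_star_dotProduct, inner_self_eq_norm_sq_to_K,
        hP.1.eigenvectorBasis.orthonormal.1 i]
      simp
    simp [hvv]
    rw [← Complex.ofReal_pow, Complex.ofReal_re]
  unfold traceNorm Matrix.PosSemidef.sqrt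
  rw [Matrix.trace_mul_comm, ← Matrix.mul_assoc, Unitary.coe_star_mul_self, Matrix.one_mul,
    Matrix.trace_diagonal]
  simp [hev, Fin.sum_univ_two, Real.sqrt_sq_eq_abs]

lemma form_one (x : Fin d → ℂ) :
    star x ⬝ᵥ ((1 : Matrix (Fin d) (Fin d) ℂ) *ᵥ x) = ((∑ i, Complex.normSq (x i) : ℝ) : ℂ) := by
  push_cast
  simp [dotProduct, Matrix.one_mulVec, Complex.normSq_eq_conj_mul_self]

lemma form_conj {K : Matrix (Fin d) (Fin d) ℂ} (hK : K.IsHermitian) (x : Fin d → ℂ) :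
    (starRingEnd ℂ) (star x ⬝ᵥ (K *ᵥ x)) = star x ⬝ᵥ (K *ᵥ x) := by
  simp only [dotProduct, mulVec, Finset.mul_sum, map_sum, _root_.map_mul, Pi.star_apply,
    Complex.star_def, Complex.conj_conj]
  rw [Finset.sum_comm]
  refine Finset.sum_congr rfl fun i _ => Finset.sum_congr rfl fun j _ => ?_
  rw [← hK.apply i j]
  simp [Complex.star_def]
  ring

lemma form_bound {K : Matrix (Fin d) (Fin d) ℂ} (x : Fin d → ℂ) :
    ‖star x ⬝ᵥ (K *ᵥ x)‖ ≤
      (∑ i, ∑ j, ‖K i j‖) * (∑ i, Complex.normSq (x i)) := by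
  have h1 : ‖star x ⬝ᵥ (K *ᵥ x)‖ ≤
      ∑ i, ∑ j, ‖K i j‖ * (‖x i‖ * ‖x j‖) := by
    refine (norm_sum_le _ _).trans ?_
    refine Finset.sum_le_sum fun i _ => ?_
    simp only [dotProduct, mulVec, Pi.star_apply, Finset.mul_sum]
    refine (norm_sum_le _ _).trans ?_
    refine Finset.sum_le_sum fun j _ => ?_
    simp [norm_mul]
    ring_nf
    exact le_refl _
  have hx : ∀ i j, ‖x i‖ * ‖x j‖ ≤ ∑ i, Complex.normSq (x i) := by
    intro i j
    have h2 : ∀ k, Complex.normSq (x k) ≤ ∑ i, Complex.normSq (x i) :=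
      fun k => Finset.single_le_sum (fun m _ => Complex.normSq_nonneg _) (Finset.mem_univ k)
    nlinarith [sq_nonneg (‖x i‖ - ‖x j‖), Complex.sq_norm (x i),
      Complex.sq_norm (x j), h2 i, h2 j]
  refine h1.trans ?_
  rw [Finset.sum_mul]
  refine Finset.sum_le_sum fun i _ => ?_
  rw [Finset.sum_mul]
  refine Finset.sum_le_sum fun j _ => ?_
  exact mul_le_mul_of_nonneg_left (hx i j) (norm_nonneg _)

lemma psd_half_add {K : Matrix (Fin d) (Fin d) ℂ} (hK : K.IsHermitian)
    (hb : (∑ i, ∑ j, ‖K i j‖) ≤ 1/2) :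
    ((1/2 : ℂ) • (1 : Matrix (Fin d) (Fin d) ℂ) + K).PosSemidef := by
  have hherm : ((1/2 : ℂ) • (1 : Matrix (Fin d) (Fin d) ℂ)).IsHermitian := by
    apply Matrix.IsHermitian.ext; intro i j
    simp [Matrix.smul_apply, Matrix.one_apply, apply_ite (star : ℂ → ℂ), eq_comm]
  refine Matrix.PosSemidef.of_dotProduct_mulVec_nonneg (hherm.add hK) fun x => ?_
  set S := ∑ i, Complex.normSq (x i) with hS
  have hS0 : 0 ≤ S := Finset.sum_nonneg fun i _ => Complex.normSq_nonneg _
  set q := star x ⬝ᵥ (K *ᵥ x) with hq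
  have hform : star x ⬝ᵥ (((1/2 : ℂ) • 1 + K) *ᵥ x) = (1/2 : ℂ) * (S:ℂ) + q := by
    rw [Matrix.add_mulVec, dotProduct_add, Matrix.smul_mulVec, dotProduct_smul, form_one]
    rw [smul_eq_mul]
  rw [hform]
  have him : q.im = 0 := by
    have h := form_conj hK x
    rw [← hq] at h
    have := congrArg Complex.im h
    simp only [Complex.conj_im] at this
    linarith
  have habs : ‖q‖ ≤ (1/2) * S := by
    refine (form_bound x).trans ?_
    have := fun z : ℂ => norm_nonneg z
    nlinarith [form_bound (K := K) x]
  have hre : -(1/2 * S) ≤ q.re := by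
    have h1 := Complex.abs_re_le_norm q
    have h2 := abs_le.mp (h1.trans habs)
    linarith [h2.1]
  rw [Complex.le_def]
  constructor
  · simp only [Complex.add_re, Complex.mul_re, Complex.ofReal_re, Complex.ofReal_im,
      Complex.zero_re]
    norm_num
    linarith
  · simp only [Complex.add_im, Complex.mul_im, Complex.ofReal_re, Complex.ofReal_im,
      Complex.zero_im, him]
    norm_num

lemma star_single (m : Fin d) (c : ℂ) :
    star (Pi.single m c : Fin d → ℂ) = Pi.single m (starRingEnd ℂ c) := by
  ext j; by_cases h : j = m <;> simp [Pi.single_apply, h]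

lemma density_diag {σ : Matrix (Fin d) (Fin d) ℂ} (hσ : IsDensityMatrix σ) (m : Fin d) :
    0 ≤ (σ m m).re ∧ (σ m m).im = 0 ∧ (σ m m).re ≤ 1 := by
  obtain ⟨hpsd, htr⟩ := hσ
  have hd : ∀ i, 0 ≤ σ i i := by
    intro i
    have h := hpsd.dotProduct_mulVec_nonneg (Pi.single i 1)
    rw [Matrix.mulVec_single, star_single] at h
    simpa [single_dotProduct] using h
  have hre : ∀ i, 0 ≤ (σ i i).re ∧ (σ i i).im = 0 := by
    intro i
    have := hd i
    rw [Complex.le_def] at this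
    simp at this
    exact ⟨this.1, this.2.symm⟩
  refine ⟨(hre m).1, (hre m).2, ?_⟩
  have htr' : (∑ i, (σ i i).re) = 1 := by
    have := congrArg Complex.re htr
    simpa [Matrix.trace, Matrix.diag, Complex.re_sum] using this
  calc (σ m m).re ≤ ∑ i, (σ i i).re :=
        Finset.single_le_sum (fun i _ => (hre i).1) (Finset.mem_univ m)
    _ = 1 := htr'

lemma density_entry_bound {σ : Matrix (Fin d) (Fin d) ℂ} (hσ : IsDensityMatrix σ)
    (k l : Fin d) : ‖σ k l‖ ≤ 1 := by
  by_cases hkl : k = l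
  · subst hkl
    obtain ⟨h1, h2, h3⟩ := density_diag hσ k
    have : σ k k = ((σ k k).re : ℂ) := Complex.ext rfl (by simp [h2])
    rw [this, Complex.norm_real, Real.norm_eq_abs, abs_of_nonneg h1]
    exact h3
  by_cases hs : σ k l = 0
  · simp [hs]
  set s := σ k l with hsdef
  set a := ‖s‖ with hadef
  have ha : 0 < a := norm_pos_iff.mpr hs
  set c : ℂ := -(starRingEnd ℂ s) / (a : ℂ) with hcdef
  have hσlk : σ l k = starRingEnd ℂ s := by
    rw [hsdef, ← hσ.1.1.apply l k]
    rfl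
  set x : Fin d → ℂ := Pi.single k 1 + Pi.single l c with hxdef
  have hform : star x ⬝ᵥ (σ *ᵥ x) = σ k k + σ l l - 2 * (a : ℂ) := by
    have hmv : σ *ᵥ x = (fun i => σ i k * 1) + fun i => σ i l * c := by
      rw [hxdef, Matrix.mulVec_add, Matrix.mulVec_single, Matrix.mulVec_single]
      ext i; simp [op_smul_eq_mul, mul_comm]
    have hstx : star x = Pi.single k 1 + Pi.single l (starRingEnd ℂ c) := by
      rw [hxdef, star_add, star_single, star_single, _root_.map_one]
    rw [hmv, hstx]
    rw [dotProduct_add, add_dotProduct, add_dotProduct]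
    simp only [single_dotProduct, Pi.add_apply]
    have h1 : s * (starRingEnd ℂ s) = ((a * a : ℝ) : ℂ) := by
      rw [Complex.mul_conj]
      norm_cast
      rw [← Complex.sq_norm, pow_two]
    have h2 : (starRingEnd ℂ) c = -s / (a : ℂ) := by
      rw [hcdef]
      simp [map_div₀, Complex.conj_ofReal]
    have ha' : (a : ℂ) ≠ 0 := by
      exact_mod_cast ne_of_gt ha
    rw [hσlk, h2, hcdef]
    rw [← hsdef]
    field_simp
    ring_nf
    push_cast at h1 ⊢
    linear_combination (σ l l - 2 * (a:ℂ)) * h1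
  have hpos := hσ.1.dotProduct_mulVec_nonneg x
  rw [hform, Complex.le_def] at hpos
  simp only [Complex.zero_re, Complex.sub_re, Complex.add_re, Complex.mul_re,
    Complex.ofReal_re, Complex.ofReal_im] at hpos
  obtain ⟨hk1, _, hk3⟩ := density_diag hσ k
  obtain ⟨hl1, _, hl3⟩ := density_diag hσ l
  have := hpos.1
  norm_num at this
  linarith

/-- The matrix of coefficients representing a real-linear functional. -/
noncomputable def Wmat (f : Matrix (Fin d) (Fin d) ℂ →L[ℝ] ℝ) :
    Matrix (Fin d) (Fin d) ℂ := Matrix.of fun k l =>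
  (f (Matrix.single k l 1) : ℂ) - Complex.I * (f (Complex.I • Matrix.single k l 1) : ℂ)

lemma f_term (f : Matrix (Fin d) (Fin d) ℂ →L[ℝ] ℝ) (k l : Fin d) (z : ℂ) :
    f (Matrix.single k l z) = (Wmat f k l * z).re := by
  have hsplit : Matrix.single k l z
      = z.re • Matrix.single k l (1:ℂ) + z.im • (Complex.I • Matrix.single k l (1:ℂ)) := by
    ext i j
    simp only [Matrix.single, Matrix.of_apply, Matrix.add_apply, Matrix.smul_apply,
      Complex.real_smul, smul_eq_mul, mul_ite, mul_zero, mul_one]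
    split
    · linear_combination (Complex.re_add_im z).symm
    · ring
  rw [hsplit, map_add, _root_.map_smul, _root_.map_smul]
  simp only [Wmat, Matrix.of_apply, smul_eq_mul, Complex.mul_re, Complex.sub_re, Complex.sub_im,
    Complex.mul_im, Complex.ofReal_re, Complex.ofReal_im, Complex.I_re, Complex.I_im]
  ring

lemma f_repr (f : Matrix (Fin d) (Fin d) ℂ →L[ℝ] ℝ) (X : Matrix (Fin d) (Fin d) ℂ) :
    f X = (((Wmat f)ᵀ * X).trace).re := by
  have hR : (((Wmat f)ᵀ * X).trace).re = ∑ k, ∑ l, (Wmat f k l * X k l).re := by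
    rw [trace_mul_eq, Finset.sum_comm, Complex.re_sum]
    refine Finset.sum_congr rfl fun k _ => ?_
    rw [Complex.re_sum]
    exact Finset.sum_congr rfl fun l _ => by rw [Matrix.transpose_apply]
  rw [hR]
  conv_lhs => rw [Matrix.matrix_eq_sum_single X]
  rw [map_sum]
  refine Finset.sum_congr rfl fun k _ => ?_
  rw [map_sum]
  exact Finset.sum_congr rfl fun l _ => f_term f k l (X k l)

/-- The hermitization of `Wmat f`. -/
noncomputable def Hmat (f : Matrix (Fin d) (Fin d) ℂ →L[ℝ] ℝ) : Matrix (Fin d) (Fin d) ℂ :=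
  (1/2 : ℂ) • ((Wmat f)ᵀ + ((Wmat f)ᵀ)ᴴ)

lemma Hmat_herm (f : Matrix (Fin d) (Fin d) ℂ →L[ℝ] ℝ) : (Hmat f).IsHermitian := by
  have h := Matrix.isHermitian_add_transpose_self ((Wmat f)ᵀ)
  show (Hmat f)ᴴ = Hmat f
  rw [Hmat, Matrix.conjTranspose_smul, h]
  congr 1
  simp [Complex.ext_iff]

lemma trace_Hmat (f : Matrix (Fin d) (Fin d) ℂ →L[ℝ] ℝ) {σ : Matrix (Fin d) (Fin d) ℂ}
    (hσ : σ.IsHermitian) : ((Hmat f) * σ).trace = ((f σ : ℝ) : ℂ) := by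
  set G := (Wmat f)ᵀ with hG
  have h1 : (Gᴴ * σ).trace = starRingEnd ℂ ((G * σ).trace) := by
    calc (Gᴴ * σ).trace = ((σ * G)ᴴ).trace := by rw [Matrix.conjTranspose_mul, hσ.eq]
      _ = starRingEnd ℂ ((σ * G).trace) := Matrix.trace_conjTranspose _
      _ = starRingEnd ℂ ((G * σ).trace) := by rw [Matrix.trace_mul_comm]
  have h2 : (Hmat f * σ).trace = (1/2:ℂ) * ((G*σ).trace + (Gᴴ*σ).trace) := by
    rw [Hmat, ← hG, Matrix.smul_mul, Matrix.trace_smul, Matrix.add_mul, Matrix.trace_add]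
    simp [smul_eq_mul]
  rw [h2, h1, Complex.add_conj, f_repr]
  push_cast
  ring

end Aux

/-- Every resource state can be strictly better distinguished in some binary
channel discrimination task than all free states. -/
theorem resource_state_channel_discrimination {d : ℕ}
    (F : Set (Matrix (Fin d) (Fin d) ℂ)) (hF_sub : ∀ σ ∈ F, IsDensityMatrix σ)
    (hF_closed : IsClosed F) (hF_conv : Convex ℝ F)
    (ρ : Matrix (Fin d) (Fin d) ℂ) (hρ : IsDensityMatrix ρ) (hρF : ρ ∉ F) :
    ∃ Λ₀ Λ₁ : Matrix (Fin d) (Fin d) ℂ → Matrix (Fin 2) (Fin 2) ℂ,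
      IsQuantumChannel Λ₀ ∧ IsQuantumChannel Λ₁ ∧
      ∀ σ ∈ F, traceNorm (Λ₀ σ - Λ₁ σ) < traceNorm (Λ₀ ρ - Λ₁ ρ) := by
  obtain ⟨f, u, hsep, hu⟩ := geometric_hahn_banach_closed_point hF_conv hF_closed hρF
  obtain ⟨H, hHdef⟩ : ∃ X : Matrix (Fin d) (Fin d) ℂ, X = Hmat f := ⟨_, rfl⟩
  have hH : H.IsHermitian := by rw [hHdef]; exact Hmat_herm f
  have htrH : ∀ σ : Matrix (Fin d) (Fin d) ℂ, σ.IsHermitian →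
      (H * σ).trace = ((f σ : ℝ) : ℂ) := by
    intro σ hσ; rw [hHdef]; exact trace_Hmat f hσ
  obtain ⟨L, hLdef⟩ : ∃ x : ℝ, x = ∑ i, ∑ j, ‖H i j‖ := ⟨_, rfl⟩
  have hL0 : 0 ≤ L := by
    rw [hLdef]
    exact Finset.sum_nonneg fun i _ => Finset.sum_nonneg fun j _ => norm_nonneg _
  have hfabs : ∀ σ, IsDensityMatrix σ → |f σ| ≤ L := by
    intro σ hσ'
    have h1 : ((f σ : ℝ) : ℂ) = (H * σ).trace := (htrH σ hσ'.1.1).symm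
    have h2 : ‖(H * σ).trace‖ ≤ L := by
      rw [trace_mul_eq, hLdef]
      refine (norm_sum_le _ _).trans ?_
      refine Finset.sum_le_sum fun k _ => (norm_sum_le _ _).trans ?_
      refine Finset.sum_le_sum fun l _ => ?_
      rw [norm_mul]
      calc ‖H k l‖ * ‖σ l k‖
          ≤ ‖H k l‖ * 1 :=
            mul_le_mul_of_nonneg_left (density_entry_bound hσ' l k) (norm_nonneg _)
        _ = ‖H k l‖ := mul_one _
    calc |f σ| = ‖((f σ : ℝ) : ℂ)‖ := by rw [Complex.norm_real, Real.norm_eq_abs]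
      _ = ‖(H * σ).trace‖ := by rw [h1]
      _ ≤ L := h2
  obtain ⟨c0, hc0⟩ : ∃ x : ℝ, x = (u - L) / 2 := ⟨_, rfl⟩
  obtain ⟨B, hBdef⟩ : ∃ x : ℝ, x = L + d * |c0| := ⟨_, rfl⟩
  have hB0 : 0 ≤ B := by rw [hBdef]; positivity
  obtain ⟨ε, hε⟩ : ∃ x : ℝ, x = 1 / (2 * (B + 1)) := ⟨_, rfl⟩
  have hε0 : 0 < ε := by rw [hε]; positivity
  obtain ⟨K, hKdef⟩ : ∃ X : Matrix (Fin d) (Fin d) ℂ, X = (ε : ℂ) • (H - (c0 : ℂ) • 1) :=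
    ⟨_, rfl⟩
  have hKherm : K.IsHermitian := by
    apply Matrix.IsHermitian.ext
    intro i j
    rw [hKdef]
    simp only [Matrix.smul_apply, Matrix.sub_apply, Matrix.one_apply, smul_eq_mul]
    by_cases h : i = j
    · subst h
      simp [Complex.conj_ofReal, hH.apply, mul_comm]
    · simp [h, Ne.symm h, Complex.conj_ofReal, hH.apply i j, mul_comm]
  have hKsum : (∑ i, ∑ j, ‖K i j‖) ≤ 1/2 := by
    have h1 : ∀ i j : Fin d, ‖K i j‖
        ≤ ε * (‖H i j‖ + |c0| * (if i = j then 1 else 0)) := by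
      intro i j
      have e1 : K i j = (ε:ℂ) * (H i j - (c0:ℂ) * (1:Matrix (Fin d) (Fin d) ℂ) i j) := by
        rw [hKdef]; simp [Matrix.smul_apply, Matrix.sub_apply, smul_eq_mul]
      rw [e1, norm_mul, Complex.norm_real, Real.norm_eq_abs, abs_of_pos hε0]
      refine mul_le_mul_of_nonneg_left ?_ hε0.le
      have e2 : ‖(c0:ℂ) * (1:Matrix (Fin d) (Fin d) ℂ) i j‖
          = |c0| * (if i = j then 1 else 0) := by
        by_cases h : i = j <;> simp [h, Matrix.one_apply, Complex.norm_real]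
      calc ‖H i j - (c0:ℂ) * (1:Matrix (Fin d) (Fin d) ℂ) i j‖
          ≤ ‖H i j‖ + ‖(c0:ℂ) * (1:Matrix (Fin d) (Fin d) ℂ) i j‖ := by
            simpa [sub_eq_add_neg] using
              norm_add_le (H i j) (-((c0:ℂ) * (1:Matrix (Fin d) (Fin d) ℂ) i j))
        _ = ‖H i j‖ + |c0| * (if i = j then 1 else 0) := by rw [e2]
    have h2 : (∑ i : Fin d, ∑ j : Fin d,
        ε * (‖H i j‖ + |c0| * (if i = j then (1:ℝ) else 0)))
        = ε * L + ε * |c0| * d := by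
      have e1 : ∀ i : Fin d, (∑ j : Fin d,
          ε * (‖H i j‖ + |c0| * (if i = j then (1:ℝ) else 0)))
          = (∑ j : Fin d, ε * ‖H i j‖) + ε * |c0| := by
        intro i
        simp only [mul_add, Finset.sum_add_distrib, mul_ite, mul_one, mul_zero]
        congr 1
        simp
      rw [Finset.sum_congr rfl fun i _ => e1 i, Finset.sum_add_distrib]
      have e2 : (∑ i : Fin d, ∑ j : Fin d, ε * ‖H i j‖) = ε * L := by
        rw [hLdef, Finset.mul_sum]
        exact Finset.sum_congr rfl fun i _ => by rw [Finset.mul_sum]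
      rw [e2]
      simp [Finset.sum_const, Finset.card_univ, nsmul_eq_mul]
      ring
    have hle : ε * L + ε * |c0| * d ≤ 1/2 := by
      have hBeq : L + |c0| * (d:ℝ) = B := by rw [hBdef]; ring
      have h5 : ε * L + ε * |c0| * (d:ℝ) = ε * B := by rw [← hBeq]; ring
      rw [h5, hε, div_mul_eq_mul_div, one_mul, div_le_iff₀ (by positivity)]
      nlinarith [hB0]
    refine le_trans (Finset.sum_le_sum fun i _ => Finset.sum_le_sum fun j _ => h1 i j) ?_
    rw [h2]
    exact hle
  have hEpsd : ((1/2:ℂ) • 1 + K).PosSemidef := psd_half_add hKherm hKsum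
  have hIEpsd' : ((1/2:ℂ) • 1 + (-K)).PosSemidef := by
    refine psd_half_add hKherm.neg ?_
    simpa [Matrix.neg_apply] using hKsum
  obtain ⟨E, hEdef⟩ : ∃ X : Matrix (Fin d) (Fin d) ℂ, X = (1/2:ℂ) • 1 + K := ⟨_, rfl⟩
  have hIE : (1 : Matrix (Fin d) (Fin d) ℂ) - E = (1/2:ℂ) • 1 + (-K) := by
    rw [hEdef]
    ext i j
    simp only [Matrix.sub_apply, Matrix.add_apply, Matrix.smul_apply, Matrix.one_apply,
      Matrix.neg_apply, smul_eq_mul]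
    by_cases h : i = j <;> (simp [h]; try ring)
  have hhalfpsd : ((1/2:ℂ) • (1:Matrix (Fin d) (Fin d) ℂ)).PosSemidef := by
    have h := psd_half_add (K := (0 : Matrix (Fin d) (Fin d) ℂ))
      (Matrix.isHermitian_zero) (by simp)
    simpa using h
  have h1half : (1 : Matrix (Fin d) (Fin d) ℂ) - (1/2:ℂ) • 1 = (1/2:ℂ) • 1 := by
    ext i j
    simp only [Matrix.sub_apply, Matrix.smul_apply, Matrix.one_apply, smul_eq_mul]
    by_cases h : i = j <;> (simp [h]; try norm_num)
  refine ⟨meas E, meas ((1/2:ℂ) • 1),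
    ⟨meas_linear E, choi_meas_posSemidef (by rw [hEdef]; exact hEpsd) (by rw [hIE]; exact hIEpsd'),
      meas_trace E⟩,
    ⟨meas_linear _, choi_meas_posSemidef hhalfpsd (by rw [h1half]; exact hhalfpsd), meas_trace _⟩,
    ?_⟩
  have htrE : ∀ X : Matrix (Fin d) (Fin d) ℂ, IsDensityMatrix X →
      (E * X).trace = (1/2 : ℂ) + ((ε * (f X - c0) : ℝ) : ℂ) := by
    intro X hX
    rw [hEdef, Matrix.add_mul, Matrix.trace_add, Matrix.smul_mul, Matrix.trace_smul,
      hKdef, Matrix.smul_mul, Matrix.trace_smul, Matrix.sub_mul, Matrix.trace_sub,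
      htrH X hX.1.1, Matrix.smul_mul, Matrix.trace_smul, Matrix.one_mul, hX.2]
    push_cast
    simp only [smul_eq_mul, mul_one]
    try ring
  have hdiff : ∀ X, IsDensityMatrix X → meas E X - meas ((1/2:ℂ) • 1) X
      = Matrix.diagonal ![((ε * (f X - c0) : ℝ) : ℂ), -((ε * (f X - c0) : ℝ) : ℂ)] := by
    intro X hX
    have htrhalf : (((1/2:ℂ) • (1:Matrix (Fin d) (Fin d) ℂ)) * X).trace = 1/2 := by
      rw [Matrix.smul_mul, Matrix.trace_smul, Matrix.one_mul, hX.2]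
      simp
    ext i j
    fin_cases i <;> fin_cases j <;>
      (simp [meas, Matrix.diagonal_apply, htrE X hX, htrhalf, hX.2]; try ring)
  have hnorm : ∀ X, IsDensityMatrix X →
      traceNorm (meas E X - meas ((1/2:ℂ) • 1) X) = 2 * |ε * (f X - c0)| := by
    intro X hX
    rw [hdiff X hX]
    exact traceNorm_diag_pm _
  intro σ hσF
  rw [hnorm σ (hF_sub σ hσF), hnorm ρ hρ]
  have h1 := hsep σ hσF
  have h3 := abs_le.mp (hfabs σ (hF_sub σ hσF))
  have key1 : |f σ - c0| ≤ (u + L)/2 := by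
    rw [abs_le]
    constructor
    · rw [hc0]; linarith [h3.1]
    · rw [hc0]; linarith
  have key2 : (u + L)/2 < f ρ - c0 := by
    rw [hc0]; linarith
  have key3 : (0:ℝ) ≤ (u + L)/2 := le_trans (abs_nonneg _) key1
  have key4 : |f ρ - c0| = f ρ - c0 := abs_of_pos (by linarith)
  rw [abs_mul, abs_mul, abs_of_pos hε0, key4]
  have key5 : |f σ - c0| < f ρ - c0 := lt_of_le_of_lt key1 key2
  nlinarith [hε0, key5, abs_nonneg (f σ - c0)]
end

section
/- Let F be a compact convex set of density matrices on ℂ^d containing a full-rank state, and ρ a density matrix. Then 1 + R_F(ρ) = max{ Tr(ρX) : X positive semidefinite, Tr(σX) ≤ 1 for all σ ∈ F }, where R_F is the generalized robustness. -/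
set_option maxHeartbeats 1000000

open Matrix ComplexOrder

noncomputable def genRobustness {d : ℕ} (F : Set (Matrix (Fin d) (Fin d) ℂ))
    (ρ : Matrix (Fin d) (Fin d) ℂ) : ℝ :=
  sInf { s : ℝ | 0 ≤ s ∧ ∃ τ : Matrix (Fin d) (Fin d) ℂ, IsDensityMatrix τ ∧
    ((1 + s : ℝ)⁻¹ : ℂ) • (ρ + (s : ℂ) • τ) ∈ F }

namespace RSD

variable {d : ℕ}

abbrev Mat (d : ℕ) := Matrix (Fin d) (Fin d) ℂ

lemma real_smul_eq (r : ℝ) (A : Mat d) : r • A = (r : ℂ) • A := by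
  ext i j
  simp [Complex.real_smul]

lemma psd_smul {A : Mat d} (hA : A.PosSemidef) {r : ℝ} (hr : 0 ≤ r) :
    ((r : ℂ) • A).PosSemidef := by
  refine PosSemidef.of_dotProduct_mulVec_nonneg ?_ ?_
  · have h1 : star (r : ℂ) = (r : ℂ) := by simp
    unfold Matrix.IsHermitian
    rw [conjTranspose_smul, hA.1, h1]
  · intro x
    rw [smul_mulVec, dotProduct_smul, smul_eq_mul]
    exact mul_nonneg (Complex.zero_le_real.2 hr) (hA.dotProduct_mulVec_nonneg x)

lemma quad_single (A : Mat d) (i j : Fin d) (a b : ℂ) :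
    star (Pi.single i a) ⬝ᵥ (A *ᵥ Pi.single j b) = star a * (A i j * b) := by
  rw [← Pi.single_star, mulVec_single, single_dotProduct]
  simp

lemma psd_diag_nonneg {A : Mat d} (hA : A.PosSemidef) (i : Fin d) : 0 ≤ A i i := by
  have := hA.dotProduct_mulVec_nonneg (Pi.single i 1)
  rwa [quad_single A i i 1 1, star_one, one_mul, mul_one] at this

lemma psd_trace_nonneg {A : Mat d} (hA : A.PosSemidef) : 0 ≤ A.trace := by
  unfold Matrix.trace
  exact Finset.sum_nonneg fun i _ => psd_diag_nonneg hA i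

lemma trace_mul_psd_nonneg {A B : Mat d} (hA : A.PosSemidef) (hB : B.PosSemidef) :
    0 ≤ (A * B).trace := by
  obtain ⟨m, v, hv⟩ := posSemidef_iff_eq_sum_vecMulVec.mp hB
  rw [hv, Matrix.mul_sum, trace_sum]
  refine Finset.sum_nonneg fun k _ => ?_
  rw [trace_mul_comm]
  have h1 : (vecMulVec (v k) (star (v k)) * A).trace = star (v k) ⬝ᵥ (A *ᵥ v k) := by
    simp only [Matrix.trace, Matrix.diag, Matrix.mul_apply, vecMulVec_apply, dotProduct,
      mulVec, Pi.star_apply, Finset.mul_sum]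
    rw [Finset.sum_comm]
    refine Finset.sum_congr rfl fun j _ => Finset.sum_congr rfl fun i _ => by ring
  rw [h1]
  exact hA.dotProduct_mulVec_nonneg _



lemma herm_smul_one_sub_psd {A : Mat d} (hA : A.IsHermitian) {t : ℝ}
    (h : ∀ i, hA.eigenvalues i ≤ t) : ((t : ℂ) • (1 : Mat d) - A).PosSemidef := by
  have hU : (hA.eigenvectorUnitary : Mat d) * (star (hA.eigenvectorUnitary : Mat d)) = 1 :=
    (Matrix.mem_unitaryGroup_iff).mp hA.eigenvectorUnitary.2
  have hdiag : diagonal (fun i => ((t - hA.eigenvalues i : ℝ) : ℂ)) =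
      (t : ℂ) • (1 : Mat d) - diagonal (RCLike.ofReal ∘ hA.eigenvalues) := by
    rw [smul_one_eq_diagonal]
    ext i j
    by_cases hij : i = j <;> simp [diagonal, hij] <;> push_cast <;> ring
  have key : (hA.eigenvectorUnitary : Mat d) *
        diagonal (fun i => ((t - hA.eigenvalues i : ℝ) : ℂ)) *
        (star (hA.eigenvectorUnitary : Mat d)) = (t : ℂ) • (1 : Mat d) - A := by
    rw [hdiag, Matrix.mul_sub, Matrix.sub_mul]
    rw [mul_smul_comm, Matrix.mul_one, smul_mul_assoc, hU]
    congr 1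
    exact (hA.spectral_theorem).symm
  rw [← key]
  refine Matrix.PosSemidef.mul_mul_conjTranspose_same ?_ _
  refine Matrix.PosSemidef.diagonal ?_
  intro i
  exact Complex.zero_le_real.2 (by linarith [h i])

lemma herm_sub_smul_one_psd {A : Mat d} (hA : A.IsHermitian) {t : ℝ}
    (h : ∀ i, t ≤ hA.eigenvalues i) : (A - (t : ℂ) • (1 : Mat d)).PosSemidef := by
  have hU : (hA.eigenvectorUnitary : Mat d) * (star (hA.eigenvectorUnitary : Mat d)) = 1 :=
    (Matrix.mem_unitaryGroup_iff).mp hA.eigenvectorUnitary.2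
  have hdiag : diagonal (fun i => ((hA.eigenvalues i - t : ℝ) : ℂ)) =
      diagonal (RCLike.ofReal ∘ hA.eigenvalues) - (t : ℂ) • (1 : Mat d) := by
    rw [smul_one_eq_diagonal]
    ext i j
    by_cases hij : i = j <;> simp [diagonal, hij] <;> push_cast <;> ring
  have key : (hA.eigenvectorUnitary : Mat d) *
        diagonal (fun i => ((hA.eigenvalues i - t : ℝ) : ℂ)) *
        (star (hA.eigenvectorUnitary : Mat d)) = A - (t : ℂ) • (1 : Mat d) := by
    rw [hdiag, Matrix.mul_sub, Matrix.sub_mul]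
    rw [mul_smul_comm, Matrix.mul_one, smul_mul_assoc, hU]
    congr 1
    exact (hA.spectral_theorem).symm
  rw [← key]
  refine Matrix.PosSemidef.mul_mul_conjTranspose_same ?_ _
  refine Matrix.PosSemidef.diagonal ?_
  intro i
  exact Complex.zero_le_real.2 (by linarith [h i])

lemma herm_trace_eq_sum {A : Mat d} (hA : A.IsHermitian) :
    A.trace = ∑ i, ((hA.eigenvalues i : ℝ) : ℂ) := by
  conv_lhs => rw [hA.spectral_theorem]
  rw [Unitary.conjStarAlgAut_apply]
  rw [trace_mul_cycle, (Matrix.mem_unitaryGroup_iff').mp hA.eigenvectorUnitary.2,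
    Matrix.one_mul, trace_diagonal]
  rfl



lemma psd_entry_norm_le {A : Mat d} (hA : A.PosSemidef) (i j : Fin d) :
    ‖A i j‖ ≤ A.trace.re := by
  have diagre : ∀ k, 0 ≤ (A k k).re ∧ (A k k).im = 0 := by
    intro k
    have := psd_diag_nonneg hA k
    rw [Complex.nonneg_iff] at this
    exact ⟨this.1, this.2.symm⟩
  have tracere : A.trace.re = ∑ k, (A k k).re := by
    unfold Matrix.trace Matrix.diag
    rw [Complex.re_sum]
  have htrnn : 0 ≤ A.trace.re := by
    rw [tracere]; exact Finset.sum_nonneg fun k _ => (diagre k).1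
  by_cases hij : i = j
  · subst hij
    have h1 : ‖A i i‖ = (A i i).re := by
      rw [Complex.norm_def, Complex.normSq_apply, (diagre i).2]
      simp only [mul_zero, add_zero]
      rw [Real.sqrt_mul_self (diagre i).1]
    rw [h1, tracere]
    exact Finset.single_le_sum (f := fun k => (A k k).re) (fun k _ => (diagre k).1)
      (Finset.mem_univ i)
  · by_cases hz : A i j = 0
    · rw [hz]; simpa using htrnn
    · have habs : (0:ℝ) < ‖A i j‖ := by
        exact norm_pos_iff.mpr hz
      set θ : ℂ := -(starRingEnd ℂ (A i j)) / (‖A i j‖ : ℂ) with hθ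
      have hnz : ((‖A i j‖ : ℝ) : ℂ) ≠ 0 := by
        exact_mod_cast habs.ne'
      have hθmul : θ * A i j = -((‖A i j‖ : ℝ) : ℂ) := by
        have h2 : (starRingEnd ℂ) (A i j) * A i j = ((‖A i j‖ ^ 2 : ℝ) : ℂ) := by
          rw [mul_comm, Complex.mul_conj, Complex.normSq_eq_norm_sq]
        rw [hθ, div_mul_eq_mul_div, neg_mul, h2, div_eq_iff hnz]
        push_cast
        ring
      have hθθ : star θ * θ = 1 := by
        have h1 : star θ * θ = (Complex.normSq θ : ℂ) := by
          rw [Complex.star_def, Complex.normSq_eq_conj_mul_self]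
        rw [h1, hθ]
        rw [map_div₀ Complex.normSq, Complex.normSq_neg, Complex.normSq_conj]
        rw [Complex.normSq_ofReal, ← Complex.sq_norm]
        have : ‖A i j‖ * ‖A i j‖ ≠ 0 := by positivity
        field_simp [sq]
        simp
      have hji : A j i = star (A i j) := by
        have := congrFun (congrFun hA.1 i) j
        simp only [conjTranspose_apply] at this
        rw [← this, star_star]
      have hQ := hA.dotProduct_mulVec_nonneg (Pi.single i 1 + Pi.single j θ)
      rw [star_add, mulVec_add, dotProduct_add, add_dotProduct, add_dotProduct,
        quad_single, quad_single, quad_single, quad_single] at hQ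
      have hsimp : star (1:ℂ) * (A i i * 1) + star θ * (A j i * 1)
          + (star (1:ℂ) * (A i j * θ) + star θ * (A j j * θ))
          = A i i + A j j - 2 * ((‖A i j‖ : ℝ) : ℂ) := by
        rw [hji]
        have e1 : star (1:ℂ) * (A i i * 1) = A i i := by ring_nf; simp
        have e2 : star (1:ℂ) * (A i j * θ) = -((‖A i j‖ : ℝ) : ℂ) := by
          rw [star_one, one_mul, mul_comm, hθmul]
        have e3 : star θ * (star (A i j) * 1) = -((‖A i j‖ : ℝ) : ℂ) := by
          rw [mul_one, ← star_mul', hθmul, star_neg]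
          congr 1
          exact Complex.star_def ▸ Complex.conj_ofReal _
        have e4 : star θ * (A j j * θ) = A j j := by
          rw [mul_comm (A j j) θ, ← mul_assoc, hθθ, one_mul]
        rw [e1, e2, e3, e4]
        ring
      rw [hsimp, Complex.nonneg_iff] at hQ
      have hre : 0 ≤ (A i i).re + (A j j).re - 2 * ‖A i j‖ := by
        have := hQ.1
        simpa using this
      have hsum2 : (A i i).re + (A j j).re ≤ A.trace.re := by
        rw [tracere]
        have := Finset.sum_le_sum_of_subset_of_nonneg
          (f := fun k => (A k k).re) (Finset.subset_univ {i, j})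
          (fun k _ _ => (diagre k).1)
        rwa [Finset.sum_pair hij] at this
      linarith

lemma psd_trace_zero {A : Mat d} (hA : A.PosSemidef) (h : A.trace = 0) : A = 0 := by
  ext i j
  have := psd_entry_norm_le hA i j
  rw [h] at this
  simp only [Complex.zero_re] at this
  have : ‖A i j‖ = 0 := le_antisymm this (norm_nonneg _)
  simpa using norm_eq_zero.mp this



lemma isClosed_nonnegC : IsClosed {z : ℂ | 0 ≤ z} := by
  have : {z : ℂ | 0 ≤ z} = Complex.re ⁻¹' (Set.Ici 0) ∩ Complex.im ⁻¹' {0} := by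
    ext z
    simp [Complex.nonneg_iff, eq_comm]
  rw [this]
  exact (isClosed_Ici.preimage Complex.continuous_re).inter
    (isClosed_singleton.preimage Complex.continuous_im)

lemma continuous_quad (x : Fin d → ℂ) :
    Continuous fun M : Mat d => star x ⬝ᵥ (M *ᵥ x) := by
  have : (fun M : Mat d => star x ⬝ᵥ (M *ᵥ x))
      = fun M => ∑ k, star (x k) * ∑ l, M k l * x l := rfl
  rw [this]
  refine continuous_finset_sum _ fun k _ => Continuous.mul continuous_const ?_
  refine continuous_finset_sum _ fun l _ => Continuous.mul ?_ continuous_const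
  exact continuous_apply_apply k l

lemma isClosed_psd : IsClosed {M : Mat d | M.PosSemidef} := by
  have : {M : Mat d | M.PosSemidef}
      = {M : Mat d | Mᴴ = M} ∩ ⋂ x : Fin d → ℂ, {M | 0 ≤ star x ⬝ᵥ (M *ᵥ x)} := by
    ext M
    simp only [Set.mem_setOf_eq, Set.mem_inter_iff, Set.mem_iInter]
    exact posSemidef_iff_dotProduct_mulVec
  rw [this]
  refine IsClosed.inter (isClosed_eq ?_ continuous_id) (isClosed_iInter fun x => ?_)
  · exact continuous_id.matrix_conjTranspose
  · exact isClosed_nonnegC.preimage (continuous_quad x)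

lemma continuous_trace_mul (A : Mat d) :
    Continuous fun M : Mat d => ((A * M).trace).re := by
  refine Complex.continuous_re.comp ?_
  have : (fun M : Mat d => (A * M).trace) = fun M => ∑ i, ∑ j, A i j * M j i := by
    funext M
    simp [Matrix.trace, Matrix.diag, Matrix.mul_apply]
  rw [this]
  refine continuous_finset_sum _ fun i _ => continuous_finset_sum _ fun j _ =>
    Continuous.mul continuous_const (continuous_apply_apply j i)

lemma continuous_mul_trace (A : Mat d) :
    Continuous fun M : Mat d => ((M * A).trace).re := by
  have : (fun M : Mat d => ((M * A).trace).re) = fun M => ((A * M).trace).re := by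
    funext M; rw [trace_mul_comm]
  rw [this]
  exact continuous_trace_mul A



noncomputable def dualY (f : Mat d →L[ℝ] ℝ) : Mat d :=
  Matrix.of fun j i => ((f (Matrix.single i j 1) : ℝ) : ℂ)
    - Complex.I * ((f (Matrix.single i j Complex.I) : ℝ) : ℂ)

lemma dualY_re (f : Mat d →L[ℝ] ℝ) (i j : Fin d) :
    ((dualY f) j i).re = f (Matrix.single i j 1) := by
  simp [dualY]

lemma dualY_im (f : Mat d →L[ℝ] ℝ) (i j : Fin d) :
    ((dualY f) j i).im = -f (Matrix.single i j Complex.I) := by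
  simp [dualY]

lemma trace_dualY (f : Mat d →L[ℝ] ℝ) (A : Mat d) :
    ((A * dualY f).trace).re = f A := by
  have lhs : ((A * dualY f).trace).re
      = ∑ i, ∑ j, ((A i j).re * f (Matrix.single i j 1)
        + (A i j).im * f (Matrix.single i j Complex.I)) := by
    rw [show (A * dualY f).trace = ∑ i, ∑ j, A i j * (dualY f) j i from by
      simp [Matrix.trace, Matrix.diag, Matrix.mul_apply]]
    rw [Complex.re_sum]
    refine Finset.sum_congr rfl fun i _ => ?_
    rw [Complex.re_sum]
    refine Finset.sum_congr rfl fun j _ => ?_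
    rw [Complex.mul_re, dualY_re, dualY_im]
    ring
  rw [lhs]
  conv_rhs => rw [matrix_eq_sum_single A]
  rw [map_sum]
  refine Finset.sum_congr rfl fun i _ => ?_
  rw [map_sum]
  refine Finset.sum_congr rfl fun j _ => ?_
  have hdec : Matrix.single i j (A i j)
      = (A i j).re • Matrix.single i j (1:ℂ)
        + (A i j).im • Matrix.single i j Complex.I := by
    ext k l
    simp only [Matrix.add_apply, Matrix.smul_apply, Matrix.single, Matrix.of_apply]
    split_ifs with h
    · rw [Complex.real_smul, Complex.real_smul, mul_one]
      exact (Complex.re_add_im _).symm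
    · simp
  rw [hdec, map_add]
  rw [f.map_smul, f.map_smul]
  simp [smul_eq_mul]

noncomputable def dualX (f : Mat d →L[ℝ] ℝ) : Mat d :=
  ((1:ℂ)/2) • (dualY f + (dualY f)ᴴ)

lemma dualX_isHermitian (f : Mat d →L[ℝ] ℝ) : (dualX f).IsHermitian := by
  unfold dualX Matrix.IsHermitian
  rw [conjTranspose_smul, conjTranspose_add, conjTranspose_conjTranspose]
  rw [show star ((1:ℂ)/2) = (1:ℂ)/2 from by simp [Complex.star_def]]
  rw [add_comm]

lemma trace_dualX {A : Mat d} (f : Mat d →L[ℝ] ℝ) (hA : A.IsHermitian) :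
    (A * dualX f).trace = ((f A : ℝ) : ℂ) := by
  have h1 : (A * (dualY f)ᴴ).trace = star ((A * dualY f).trace) := by
    rw [← trace_conjTranspose, conjTranspose_mul, hA.eq, trace_mul_comm]
  unfold dualX
  rw [mul_smul_comm, trace_smul, Matrix.mul_add, trace_add, h1, smul_eq_mul]
  rw [Complex.star_def, Complex.add_conj]
  rw [← trace_dualY f A]
  push_cast
  ring

lemma vecMulVec_psd (v : Fin d → ℂ) : (vecMulVec v (star v)).PosSemidef := by
  refine PosSemidef.of_dotProduct_mulVec_nonneg ?_ ?_
  · unfold Matrix.IsHermitian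
    ext i j
    simp only [conjTranspose_apply, vecMulVec_apply, Pi.star_apply, star_mul', star_star]
    ring
  · intro x
    have h1 : vecMulVec v (star v) *ᵥ x = (star v ⬝ᵥ x) • v := by
      ext k
      simp only [mulVec, vecMulVec_apply, dotProduct, Pi.smul_apply, Pi.star_apply,
        smul_eq_mul, Finset.sum_mul, Finset.mul_sum]
      refine Finset.sum_congr rfl fun l _ => by ring
    rw [h1]
    have h2 : star x ⬝ᵥ ((star v ⬝ᵥ x) • v) = (star v ⬝ᵥ x) * star (star v ⬝ᵥ x) := by
      rw [dotProduct_smul, smul_eq_mul]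
      congr 1
      simp only [dotProduct, Pi.star_apply, star_sum, star_mul', star_star]
      refine Finset.sum_congr rfl fun l _ => by ring
    rw [h2]
    exact mul_star_self_nonneg _

lemma trace_vecMulVec_mul (v : Fin d → ℂ) (X : Mat d) :
    (vecMulVec v (star v) * X).trace = star v ⬝ᵥ (X *ᵥ v) := by
  simp only [Matrix.trace, Matrix.diag, Matrix.mul_apply, vecMulVec_apply, dotProduct,
    mulVec, Pi.star_apply, Finset.mul_sum]
  rw [Finset.sum_comm]
  refine Finset.sum_congr rfl fun j _ => Finset.sum_congr rfl fun i _ => by ring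


open Pointwise in
lemma exists_feasible_of_not_cone (F : Set (Mat d)) (hF_cpt : IsCompact F)
    (hF_conv : Convex ℝ F) (hF_sub : ∀ σ ∈ F, IsDensityMatrix σ)
    (hF_ne : F.Nonempty) {ρ : Mat d} (hρpsd : ρ.PosSemidef) {c : ℝ} (hc0 : 0 < c)
    (hc : ∀ c' : ℝ, 0 ≤ c' → c' ≤ c → ∀ σ ∈ F, ¬((c' : ℂ) • σ - ρ).PosSemidef) :
    ∃ X : Mat d, X.PosSemidef ∧ (∀ σ ∈ F, ((σ * X).trace).re ≤ 1)
      ∧ ((ρ * X).trace).re = c := by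
  classical
  obtain ⟨σ₀, hσ₀⟩ := hF_ne
  letI : LocallyConvexSpace ℝ (Mat d) :=
    inferInstanceAs (LocallyConvexSpace ℝ (Fin d → Fin d → ℂ))
  set K : Set (Mat d) := (fun p : ℝ × Mat d => p.1 • p.2) '' (Set.Icc (0:ℝ) c ×ˢ F) with hK
  have hK_cpt : IsCompact K :=
    ((isCompact_Icc).prod hF_cpt).image (continuous_fst.smul continuous_snd)
  set N : Set (Mat d) := {M : Mat d | M.PosSemidef} with hN
  set C : Set (Mat d) := K + (-N) with hC
  have hmemC : ∀ z : Mat d, z ∈ C ↔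
      ∃ c' σ P, 0 ≤ c' ∧ c' ≤ c ∧ σ ∈ F ∧ P.PosSemidef ∧ z = c' • σ - P := by
    intro z
    constructor
    · rintro ⟨x, hx, y, hy, rfl⟩
      obtain ⟨⟨c', σ⟩, ⟨hc', hσ⟩, rfl⟩ := hx
      rw [Set.mem_neg] at hy
      exact ⟨c', σ, -y, hc'.1, hc'.2, hσ, hy, by simp [sub_eq_add_neg]⟩
    · rintro ⟨c', σ, P, h0, h1, hσ, hP, rfl⟩
      refine ⟨c' • σ, ⟨⟨c', σ⟩, ⟨⟨h0, h1⟩, hσ⟩, rfl⟩, -P, ?_, by simp [sub_eq_add_neg]⟩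
      rw [Set.mem_neg, neg_neg]
      exact hP
  have hN_closed : IsClosed N := isClosed_psd
  have hC_closed : IsClosed C := by
    rw [hC]
    exact IsClosed.add_left_of_isCompact hN_closed.neg hK_cpt
  have hN_conv : Convex ℝ N := by
    intro A hA B hB a b ha hb _
    simp only [hN, Set.mem_setOf_eq] at *
    rw [real_smul_eq, real_smul_eq]
    exact (psd_smul hA ha).add (psd_smul hB hb)
  have hK_conv : Convex ℝ K := by
    rintro x ⟨⟨c₁, σ₁⟩, ⟨hc₁, hσ₁⟩, rfl⟩ y ⟨⟨c₂, σ₂⟩, ⟨hc₂, hσ₂⟩, rfl⟩ a b ha hb hab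
    simp only [Set.mem_Icc] at hc₁ hc₂
    by_cases hs : a * c₁ + b * c₂ = 0
    · have h1 : a * c₁ = 0 := by nlinarith [mul_nonneg ha hc₁.1, mul_nonneg hb hc₂.1]
      have h2 : b * c₂ = 0 := by nlinarith [mul_nonneg ha hc₁.1, mul_nonneg hb hc₂.1]
      refine ⟨⟨0, σ₁⟩, ⟨⟨le_refl _, hc0.le⟩, hσ₁⟩, ?_⟩
      simp only [smul_smul, zero_smul]
      rw [h1, h2]
      simp
    · have hspos : 0 < a * c₁ + b * c₂ := by
        rcases lt_or_eq_of_le (add_nonneg (mul_nonneg ha hc₁.1) (mul_nonneg hb hc₂.1)) with h | h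
        · exact h
        · exact absurd h.symm hs
      set s := a * c₁ + b * c₂ with hsdef
      refine ⟨⟨s, (a * c₁ / s) • σ₁ + (b * c₂ / s) • σ₂⟩, ⟨⟨hspos.le, ?_⟩, ?_⟩, ?_⟩
      · nlinarith [mul_le_mul_of_nonneg_left hc₁.2 ha, mul_le_mul_of_nonneg_left hc₂.2 hb]
      · refine hF_conv hσ₁ hσ₂ (div_nonneg (mul_nonneg ha hc₁.1) hspos.le)
          (div_nonneg (mul_nonneg hb hc₂.1) hspos.le) ?_
        rw [← add_div, ← hsdef, div_self hs]
      · simp only [smul_add, smul_smul]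
        rw [mul_div_cancel₀ _ hs, mul_div_cancel₀ _ hs]
  have hC_conv : Convex ℝ C := hK_conv.add hN_conv.neg
  have hρ_notin : ρ ∉ C := by
    rw [hmemC]
    rintro ⟨c', σ, P, h0, h1, hσ, hP, hz⟩
    refine hc c' h0 h1 σ hσ ?_
    rw [← real_smul_eq]
    have : (c' : ℝ) • σ - ρ = P := by rw [hz]; abel
    rw [this]
    exact hP
  obtain ⟨f, u, hfC, hfρ⟩ := geometric_hahn_banach_closed_point hC_conv hC_closed hρ_notin
  have hzeroC : (0 : Mat d) ∈ C := by
    rw [hmemC]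
    exact ⟨0, σ₀, 0, le_refl _, hc0.le, hσ₀, Matrix.PosSemidef.zero, by simp⟩
  have hupos : 0 < u := by
    have := hfC 0 hzeroC
    rwa [map_zero] at this
  have hfρpos : 0 < f ρ := hupos.trans hfρ
  have hfpsd : ∀ P : Mat d, P.PosSemidef → 0 ≤ f P := by
    intro P hP
    by_contra hneg
    push_neg at hneg
    set lam : ℝ := u / (-(f P)) with hlam
    have hlampos : 0 < lam := div_pos hupos (by linarith)
    have hmem : -(lam • P) ∈ C := by
      rw [hmemC]
      refine ⟨0, σ₀, lam • P, le_refl _, hc0.le, hσ₀, ?_, by simp⟩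
      rw [real_smul_eq]
      exact psd_smul hP hlampos.le
    have := hfC _ hmem
    rw [map_neg, f.map_smul, smul_eq_mul] at this
    have h2 : lam * -f P = u := div_mul_cancel₀ u (by linarith : -f P ≠ 0)
    have heq : -(lam * f P) = u := by rw [← h2]; ring
    rw [heq] at this
    exact lt_irrefl _ this
  have hfF : ∀ σ ∈ F, c * f σ < u := by
    intro σ hσ
    have hmem : c • σ ∈ C := by
      rw [hmemC]
      exact ⟨c, σ, 0, hc0.le, le_refl _, hσ, Matrix.PosSemidef.zero, by simp⟩
    have := hfC _ hmem
    rwa [f.map_smul, smul_eq_mul] at this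
  set X₁ : Mat d := dualX f with hX₁
  have htr : ∀ A : Mat d, A.IsHermitian → ((A * X₁).trace) = ((f A : ℝ) : ℂ) :=
    fun A hA => trace_dualX f hA
  have hX₁psd : X₁.PosSemidef := by
    refine PosSemidef.of_dotProduct_mulVec_nonneg (dualX_isHermitian f) fun v => ?_
    have h1 := trace_vecMulVec_mul v X₁
    rw [htr _ (vecMulVec_psd v).1] at h1
    rw [← h1]
    exact Complex.zero_le_real.2 (hfpsd _ (vecMulVec_psd v))
  set r : ℝ := c / f ρ with hr
  have hrnn : 0 ≤ r := div_nonneg hc0.le hfρpos.le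
  refine ⟨(r : ℂ) • X₁, psd_smul hX₁psd hrnn, ?_, ?_⟩
  · intro σ hσ
    have : (σ * ((r:ℂ) • X₁)).trace = (r : ℂ) * ((f σ : ℝ) : ℂ) := by
      rw [mul_smul_comm, trace_smul, smul_eq_mul, htr σ (hF_sub σ hσ).1.1]
    rw [this]
    have : ((r : ℂ) * ((f σ : ℝ) : ℂ)).re = r * f σ := by
      rw [← Complex.ofReal_mul]
      exact Complex.ofReal_re _
    rw [this, hr, div_mul_eq_mul_div, div_le_one hfρpos]
    exact le_of_lt ((hfF σ hσ).trans_le hfρ.le)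
  · have : (ρ * ((r:ℂ) • X₁)).trace = (r : ℂ) * ((f ρ : ℝ) : ℂ) := by
      rw [mul_smul_comm, trace_smul, smul_eq_mul, htr ρ hρpsd.1]
    rw [this, ← Complex.ofReal_mul, Complex.ofReal_re, hr, div_mul_cancel₀ _ hfρpos.ne']

def coneSet (F : Set (Mat d)) (ρ : Mat d) : Set ℝ :=
  {c : ℝ | ∃ σ ∈ F, ((c : ℂ) • σ - ρ).PosSemidef}

def robustSet (F : Set (Mat d)) (ρ : Mat d) : Set ℝ :=
  { s : ℝ | 0 ≤ s ∧ ∃ τ : Mat d, IsDensityMatrix τ ∧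
    ((1 + s : ℝ)⁻¹ : ℂ) • (ρ + (s : ℂ) • τ) ∈ F }

lemma genRobustness_eq (F : Set (Mat d)) (ρ : Mat d) :
    genRobustness F ρ = sInf (robustSet F ρ) := rfl

lemma coneSet_one_le {F : Set (Mat d)} {ρ : Mat d}
    (hF_sub : ∀ σ ∈ F, IsDensityMatrix σ) (hρ : IsDensityMatrix ρ)
    {c : ℝ} (hc : c ∈ coneSet F ρ) : 1 ≤ c := by
  obtain ⟨σ, hσ, hpsd⟩ := hc
  have h1 := psd_trace_nonneg hpsd
  rw [trace_sub, trace_smul, smul_eq_mul, (hF_sub σ hσ).2, hρ.2, mul_one] at h1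
  have h2 : (c : ℂ) - 1 = ((c - 1 : ℝ) : ℂ) := by push_cast; ring
  rw [h2, Complex.zero_le_real] at h1
  linarith

lemma robust_mem_cone {F : Set (Mat d)} {ρ : Mat d} {s : ℝ}
    (hs : s ∈ robustSet F ρ) : 1 + s ∈ coneSet F ρ := by
  obtain ⟨hs0, τ, hτ, hmem⟩ := hs
  have hne : (1 + s : ℝ) ≠ 0 := by linarith
  refine ⟨_, hmem, ?_⟩
  have h1 : ((1 + s : ℝ) : ℂ) • (((1 + s : ℝ)⁻¹ : ℂ) • (ρ + (s : ℂ) • τ))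
      = ρ + (s : ℂ) • τ := by
    rw [smul_smul, ← Complex.ofReal_inv, ← Complex.ofReal_mul, mul_inv_cancel₀ hne,
      Complex.ofReal_one, one_smul]
  rw [h1, add_sub_cancel_left]
  exact psd_smul hτ.1 hs0

lemma cone_mem_robust {F : Set (Mat d)} {ρ : Mat d} (hd : 0 < d)
    (hF_sub : ∀ σ ∈ F, IsDensityMatrix σ) (hρ : IsDensityMatrix ρ)
    {c : ℝ} (hc : c ∈ coneSet F ρ) : c - 1 ∈ robustSet F ρ := by
  have hc1 : 1 ≤ c := coneSet_one_le hF_sub hρ hc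
  obtain ⟨σ, hσ, hpsd⟩ := hc
  rcases eq_or_lt_of_le hc1 with h1 | h1
  · -- c = 1 : σ = ρ, so ρ ∈ F
    subst h1
    have htr : (((1 : ℝ) : ℂ) • σ - ρ).trace = 0 := by
      rw [trace_sub, trace_smul, smul_eq_mul, (hF_sub σ hσ).2, hρ.2, mul_one]
      norm_num
    have h4 := psd_trace_zero hpsd htr
    rw [Complex.ofReal_one, one_smul, sub_eq_zero] at h4
    haveI : NeZero d := ⟨hd.ne'⟩
    refine ⟨by norm_num, (((d : ℝ)⁻¹ : ℝ) : ℂ) • 1, ⟨?_, ?_⟩, ?_⟩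
    · exact psd_smul Matrix.PosSemidef.one (by positivity)
    · rw [trace_smul, trace_one, smul_eq_mul]
      push_cast
      field_simp
      simp
    · have h5 : (((1 + (1 - 1 : ℝ) : ℝ) : ℂ))⁻¹
          • (ρ + ((1 - 1 : ℝ) : ℂ) • ((((d : ℝ)⁻¹ : ℝ) : ℂ) • 1)) = ρ := by
        norm_num
      rw [h5]
      rwa [h4] at hσ
  · -- c > 1
    set s : ℝ := c - 1 with hsdef
    have hspos : 0 < s := by simp only [hsdef]; linarith
    have hcne : (c : ℂ) ≠ 0 := by exact_mod_cast (by linarith : c ≠ 0)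
    refine ⟨hspos.le, ((s⁻¹ : ℝ) : ℂ) • ((c : ℂ) • σ - ρ), ⟨?_, ?_⟩, ?_⟩
    · exact psd_smul hpsd (by positivity)
    · rw [trace_smul, smul_eq_mul, trace_sub, trace_smul, smul_eq_mul,
        (hF_sub σ hσ).2, hρ.2, mul_one]
      rw [show (c : ℂ) - 1 = ((s : ℝ) : ℂ) from by push_cast [hsdef]; ring]
      rw [← Complex.ofReal_mul, inv_mul_cancel₀ hspos.ne', Complex.ofReal_one]
    · have h2 : (s : ℂ) • (((s⁻¹ : ℝ) : ℂ) • ((c : ℂ) • σ - ρ)) = (c : ℂ) • σ - ρ := by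
        rw [smul_smul, ← Complex.ofReal_mul, mul_inv_cancel₀ hspos.ne',
          Complex.ofReal_one, one_smul]
      have h4 : ρ + (s : ℂ) • (((s⁻¹ : ℝ) : ℂ) • ((c : ℂ) • σ - ρ)) = (c : ℂ) • σ := by
        rw [h2, add_sub_cancel]
      rw [h4]
      have h3 : ((1 + s : ℝ) : ℂ) = (c : ℂ) := by push_cast [hsdef]; ring
      rw [h3, smul_smul, inv_mul_cancel₀ hcne, one_smul]
      exact hσ

lemma ofReal_mul_re (r : ℝ) (z : ℂ) : ((r : ℂ) * z).re = r * z.re := by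
  rw [Complex.mul_re, Complex.ofReal_re, Complex.ofReal_im]
  ring

lemma posdef_eps (hd : 0 < d) {σ₀ : Mat d} (hpd : σ₀.PosDef) :
    ∃ ε : ℝ, 0 < ε ∧ (σ₀ - (ε : ℂ) • 1).PosSemidef := by
  haveI : Nonempty (Fin d) := Fin.pos_iff_nonempty.mp hd
  classical
  set ε : ℝ := Finset.univ.inf' Finset.univ_nonempty hpd.1.eigenvalues with hε
  refine ⟨ε, ?_, ?_⟩
  · rw [hε, Finset.lt_inf'_iff]
    exact fun i _ => hpd.eigenvalues_pos i
  · exact herm_sub_smul_one_psd hpd.1 fun i => Finset.inf'_le _ (Finset.mem_univ i)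

lemma one_sub_density_psd {ρ : Mat d} (hρ : IsDensityMatrix ρ) :
    (((1 : ℝ) : ℂ) • (1 : Mat d) - ρ).PosSemidef := by
  refine herm_smul_one_sub_psd hρ.1.1 fun i => ?_
  have hsum : ∑ j, hρ.1.1.eigenvalues j = 1 := by
    have h1 : (∑ j, ((hρ.1.1.eigenvalues j : ℝ) : ℂ)) = 1 :=
      (herm_trace_eq_sum hρ.1.1).symm.trans hρ.2
    exact_mod_cast h1
  calc hρ.1.1.eigenvalues i ≤ ∑ j, hρ.1.1.eigenvalues j :=
        Finset.single_le_sum (fun j _ => hρ.1.eigenvalues_nonneg j) (Finset.mem_univ i)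
    _ = 1 := hsum

lemma coneSet_nonempty {F : Set (Mat d)} {ρ : Mat d} (hd : 0 < d)
    (hρ : IsDensityMatrix ρ) {σ₀ : Mat d} (hσ₀F : σ₀ ∈ F) (hσ₀pd : σ₀.PosDef) :
    (coneSet F ρ).Nonempty := by
  obtain ⟨ε, hε, hεpsd⟩ := posdef_eps hd hσ₀pd
  refine ⟨ε⁻¹, σ₀, hσ₀F, ?_⟩
  have key : ((ε⁻¹ : ℝ) : ℂ) • σ₀ - ρ
      = ((ε⁻¹ : ℝ) : ℂ) • (σ₀ - (ε : ℂ) • 1) + (((1 : ℝ) : ℂ) • (1 : Mat d) - ρ) := by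
    rw [smul_sub, smul_smul, ← Complex.ofReal_mul, inv_mul_cancel₀ hε.ne']
    abel
  rw [key]
  exact (psd_smul hεpsd (inv_nonneg.mpr hε.le)).add (one_sub_density_psd hρ)

lemma one_add_genRobustness {F : Set (Mat d)} {ρ : Mat d} (hd : 0 < d)
    (hF_sub : ∀ σ ∈ F, IsDensityMatrix σ) (hρ : IsDensityMatrix ρ)
    (hne : (coneSet F ρ).Nonempty) :
    1 + genRobustness F ρ = sInf (coneSet F ρ) := by
  have hbddR : BddBelow (robustSet F ρ) := ⟨0, fun s hs => hs.1⟩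
  have hbddC : BddBelow (coneSet F ρ) := ⟨1, fun c hc => coneSet_one_le hF_sub hρ hc⟩
  have hRne : (robustSet F ρ).Nonempty := by
    obtain ⟨c, hc⟩ := hne
    exact ⟨c - 1, cone_mem_robust hd hF_sub hρ hc⟩
  rw [genRobustness_eq]
  apply le_antisymm
  · refine le_csInf hne fun c hc => ?_
    have := csInf_le hbddR (cone_mem_robust hd hF_sub hρ hc)
    linarith
  · have h2 : ∀ s ∈ robustSet F ρ, sInf (coneSet F ρ) - 1 ≤ s := fun s hs => by
      have := csInf_le hbddC (robust_mem_cone hs)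
      linarith
    have := le_csInf hRne h2
    linarith

lemma value_le {F : Set (Mat d)} {ρ : Mat d}
    (hF_sub : ∀ σ ∈ F, IsDensityMatrix σ) (hρ : IsDensityMatrix ρ)
    (hRne : (robustSet F ρ).Nonempty) {X : Mat d} (hX : X.PosSemidef)
    (hfeas : ∀ σ ∈ F, ((σ * X).trace).re ≤ 1) :
    ((ρ * X).trace).re ≤ 1 + genRobustness F ρ := by
  rw [genRobustness_eq]
  have key : ∀ s ∈ robustSet F ρ, ((ρ * X).trace).re - 1 ≤ s := by
    rintro s ⟨hs0, τ, hτ, hmem⟩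
    have hne1 : ((1 + s : ℝ) : ℂ) ≠ 0 := by
      exact_mod_cast (by linarith : (1 + s : ℝ) ≠ 0)
    set σ : Mat d := ((1 + s : ℝ)⁻¹ : ℂ) • (ρ + (s : ℂ) • τ) with hσdef
    have h1 : ρ = ((1 + s : ℝ) : ℂ) • σ - (s : ℂ) • τ := by
      rw [hσdef, smul_smul, mul_inv_cancel₀ hne1, one_smul, add_sub_cancel_right]
    have h2 : (ρ * X).trace
        = ((1 + s : ℝ) : ℂ) * (σ * X).trace - (s : ℂ) * (τ * X).trace := by
      conv_lhs => rw [h1]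
      simp only [Matrix.sub_mul, trace_sub, smul_mul_assoc, trace_smul, smul_eq_mul]
    have h3 : ((ρ * X).trace).re
        = (1 + s) * ((σ * X).trace).re - s * ((τ * X).trace).re := by
      rw [h2, Complex.sub_re, ofReal_mul_re, ofReal_mul_re]
    have h4 : 0 ≤ ((τ * X).trace).re :=
      (Complex.nonneg_iff.mp (trace_mul_psd_nonneg hτ.1 hX)).1
    have h5 := hfeas σ hmem
    nlinarith [mul_le_mul_of_nonneg_left h5 (by linarith : (0:ℝ) ≤ 1 + s),
      mul_nonneg hs0 h4]
  have := le_csInf hRne key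
  linarith

end RSD

/-- Strong duality: `1 + R_F(ρ)` is the maximum of `Tr(ρX)` over dual-feasible
witnesses `X`, and the maximum is attained. -/
theorem robustness_strong_duality {d : ℕ} (F : Set (Matrix (Fin d) (Fin d) ℂ))
    (hF_sub : ∀ σ ∈ F, IsDensityMatrix σ)
    (hF_cpt : IsCompact F) (hF_conv : Convex ℝ F)
    (hF_full : ∃ σ ∈ F, σ.PosDef)
    (ρ : Matrix (Fin d) (Fin d) ℂ) (hρ : IsDensityMatrix ρ) :
    IsGreatest
      { v : ℝ | ∃ X : Matrix (Fin d) (Fin d) ℂ, X.PosSemidef ∧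
          (∀ σ ∈ F, (σ * X).trace.re ≤ 1) ∧ v = (ρ * X).trace.re }
      (1 + genRobustness F ρ) := by
  classical
  obtain ⟨σ₀, hσ₀F, hσ₀pd⟩ := hF_full
  have hd : 0 < d := by
    rcases Nat.eq_zero_or_pos d with h | h
    · exfalso
      subst h
      have := hρ.2
      rw [Matrix.trace] at this
      simp at this
    · exact h
  set S : Set ℝ := { v : ℝ | ∃ X : Matrix (Fin d) (Fin d) ℂ, X.PosSemidef ∧
      (∀ σ ∈ F, (σ * X).trace.re ≤ 1) ∧ v = (ρ * X).trace.re } with hSdef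
  have hF_ne : F.Nonempty := ⟨σ₀, hσ₀F⟩
  have hCne : (RSD.coneSet F ρ).Nonempty := RSD.coneSet_nonempty hd hρ hσ₀F hσ₀pd
  have hbddC : BddBelow (RSD.coneSet F ρ) :=
    ⟨1, fun c hc => RSD.coneSet_one_le hF_sub hρ hc⟩
  have hRne : (RSD.robustSet F ρ).Nonempty := by
    obtain ⟨c, hc⟩ := hCne
    exact ⟨c - 1, RSD.cone_mem_robust hd hF_sub hρ hc⟩
  have hrel : 1 + genRobustness F ρ = sInf (RSD.coneSet F ρ) :=
    RSD.one_add_genRobustness hd hF_sub hρ hCne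
  set t : ℝ := 1 + genRobustness F ρ with htdef
  have ht1 : 1 ≤ t := by
    rw [hrel]
    exact le_csInf hCne fun c hc => RSD.coneSet_one_le hF_sub hρ hc
  have hub : ∀ v ∈ S, v ≤ t := by
    rintro v ⟨X, h1, h2, rfl⟩
    exact RSD.value_le hF_sub hρ hRne h1 h2
  have hmem_of_lt : ∀ c : ℝ, 0 < c → c < t → c ∈ S := by
    intro c hc0 hct
    have hnc : ∀ c' : ℝ, 0 ≤ c' → c' ≤ c → ∀ σ ∈ F, ¬((c' : ℂ) • σ - ρ).PosSemidef := by
      intro c' h0 h1 σ hσ hpsd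
      have hmem : c' ∈ RSD.coneSet F ρ := ⟨σ, hσ, hpsd⟩
      have := csInf_le hbddC hmem
      rw [← hrel] at this
      linarith
    obtain ⟨X, hX1, hX2, hX3⟩ := RSD.exists_feasible_of_not_cone F hF_cpt hF_conv
      hF_sub hF_ne hρ.1 hc0 hnc
    exact ⟨X, hX1, hX2, hX3.symm⟩
  obtain ⟨ε, hε, hεpsd⟩ := RSD.posdef_eps hd hσ₀pd
  set D : Set (Matrix (Fin d) (Fin d) ℂ) :=
    {X | X.PosSemidef ∧ ∀ σ ∈ F, ((σ * X).trace).re ≤ 1} with hDdef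
  have hD_closed : IsClosed D := by
    have hDeq : D = {X : Matrix (Fin d) (Fin d) ℂ | X.PosSemidef}
        ∩ ⋂ σ ∈ F, {X : Matrix (Fin d) (Fin d) ℂ | ((σ * X).trace).re ≤ 1} := by
      ext X
      simp only [hDdef, Set.mem_setOf_eq, Set.mem_inter_iff, Set.mem_iInter]
    rw [hDeq]
    exact RSD.isClosed_psd.inter (isClosed_biInter fun σ _ =>
      isClosed_le (RSD.continuous_trace_mul σ) continuous_const)
  have hD_bound : ∀ X ∈ D, ∀ i j, ‖X i j‖ ≤ ε⁻¹ := by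
    rintro X ⟨hX1, hX2⟩ i j
    have h6 : 0 ≤ (((σ₀ - (ε : ℂ) • 1) * X).trace) := RSD.trace_mul_psd_nonneg hεpsd hX1
    have h7 : ((σ₀ - (ε : ℂ) • 1) * X).trace = (σ₀ * X).trace - (ε : ℂ) * X.trace := by
      rw [Matrix.sub_mul, trace_sub, smul_mul_assoc, trace_smul, Matrix.one_mul,
        smul_eq_mul]
    have h8 : 0 ≤ ((σ₀ * X).trace).re - ε * (X.trace).re := by
      have := (Complex.nonneg_iff.mp h6).1
      rwa [h7, Complex.sub_re, RSD.ofReal_mul_re] at this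
    have h9 : ε * (X.trace).re ≤ 1 := by
      have := hX2 σ₀ hσ₀F
      linarith
    have hT : (X.trace).re ≤ ε⁻¹ := by
      rw [← mul_le_mul_iff_right₀ hε, mul_inv_cancel₀ hε.ne']
      linarith
    exact (RSD.psd_entry_norm_le hX1 i j).trans hT
  have hD_cpt : IsCompact D := by
    have hB_cpt : IsCompact (Set.univ.pi fun _ : Fin d =>
        Set.univ.pi fun _ : Fin d => Metric.closedBall (0 : ℂ) ε⁻¹) :=
      isCompact_univ_pi fun _ => isCompact_univ_pi fun _ => isCompact_closedBall _ _
    refine hB_cpt.of_isClosed_subset hD_closed ?_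
    intro X hX
    rw [Set.mem_pi]
    intro i _
    rw [Set.mem_pi]
    intro j _
    rw [mem_closedBall_zero_iff]
    exact hD_bound X hX i j
  have hSimg : S = (fun X : Matrix (Fin d) (Fin d) ℂ => ((ρ * X).trace).re) '' D := by
    ext v
    constructor
    · rintro ⟨X, h1, h2, h3⟩
      exact ⟨X, ⟨h1, h2⟩, h3.symm⟩
    · rintro ⟨X, ⟨h1, h2⟩, h3⟩
      exact ⟨X, h1, h2, h3.symm⟩
  have hS_cpt : IsCompact S := by
    rw [hSimg]
    exact hD_cpt.image (RSD.continuous_trace_mul ρ)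
  have hS_ne : S.Nonempty := ⟨t / 2, hmem_of_lt (t / 2) (by linarith) (by linarith)⟩
  have hsup : sSup S = t := by
    apply le_antisymm (csSup_le hS_ne hub)
    by_contra hlt
    push_neg at hlt
    set c : ℝ := (max (sSup S) 0 + t) / 2 with hcdef
    have hmax : max (sSup S) 0 < t := max_lt hlt (by linarith)
    have hc0 : 0 < c := by
      have := le_max_right (sSup S) 0
      rw [hcdef]
      linarith
    have hct : c < t := by
      rw [hcdef]
      linarith
    have hcS : c ∈ S := hmem_of_lt c hc0 hct
    have := le_csSup ⟨t, hub⟩ hcS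
    have hgt : sSup S < c := by
      have := le_max_left (sSup S) 0
      rw [hcdef]
      linarith
    linarith
  constructor
  · have := hS_cpt.sSup_mem hS_ne
    rwa [hsup] at this
  · exact hub
end

section
/- Let F be a compact convex set of density matrices on ℂ^d containing a full-rank state and let ρ be a density matrix with generalized robustness R_F(ρ) = r < ∞. For any finite family of completely positive trace-nonincreasing maps {Ψ_i} summing to a trace-preserving map, and any POVM {M_i}, the success probability p(ρ) = Σ_i Tr(M_i Ψ_i(ρ)) satisfies p(ρ) ≤ (1 + r) · max_{σ ∈ F} p(σ). -/
open Matrix ComplexOrder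

/-- A subchannel: linear, completely positive, trace-nonincreasing. -/
def IsSubchannel {d m : ℕ}
    (Φ : Matrix (Fin d) (Fin d) ℂ → Matrix (Fin m) (Fin m) ℂ) : Prop :=
  IsLinearMap ℂ Φ ∧ (choi Φ).PosSemidef ∧
    ∀ η : Matrix (Fin d) (Fin d) ℂ, η.PosSemidef → (Φ η).trace.re ≤ η.trace.re

lemma trace_re_nonneg {k : ℕ} {A : Matrix (Fin k) (Fin k) ℂ} (hA : A.PosSemidef) :
    0 ≤ A.trace.re := by
  have h : ∀ i, 0 ≤ (A i i).re := by
    intro i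
    exact (Complex.le_def.mp hA.diag_nonneg).1
  rw [Matrix.trace, Complex.re_sum]
  exact Finset.sum_nonneg fun i _ => h i

open scoped Matrix.Norms.L2Operator MatrixOrder in
lemma posSemidef_iff_eq_transpose_mul_self {ι : Type*} [Fintype ι] [DecidableEq ι]
    {A : Matrix ι ι ℂ} : A.PosSemidef ↔ ∃ B : Matrix ι ι ℂ, A = Bᴴ * B := by
  constructor
  · intro hA
    obtain ⟨B, hB⟩ := CStarAlgebra.nonneg_iff_eq_star_mul_self.mp hA.nonneg
    exact ⟨B, hB⟩
  · rintro ⟨B, rfl⟩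
    exact posSemidef_conjTranspose_mul_self B

lemma trace_mul_re_nonneg {k : ℕ} {M A : Matrix (Fin k) (Fin k) ℂ}
    (hM : M.PosSemidef) (hA : A.PosSemidef) : 0 ≤ (M * A).trace.re := by
  obtain ⟨B, rfl⟩ := posSemidef_iff_eq_transpose_mul_self.mp hA
  rw [← Matrix.mul_assoc, Matrix.trace_mul_comm, ← Matrix.mul_assoc]
  exact trace_re_nonneg (hM.mul_mul_conjTranspose_same B)

lemma entry_formula {d m : ℕ} {Φ : Matrix (Fin d) (Fin d) ℂ → Matrix (Fin m) (Fin m) ℂ}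
    (hlin : IsLinearMap ℂ Φ) (η : Matrix (Fin d) (Fin d) ℂ) (i j : Fin m) :
    Φ η i j = ∑ a, ∑ b, η a b * choi Φ (i, a) (j, b) := by
  have hL : Φ = ⇑(IsLinearMap.mk' Φ hlin) := rfl
  conv_lhs => rw [matrix_eq_sum_single η, hL]
  rw [map_sum]
  simp only [map_sum]
  have hstd : ∀ (a b : Fin d) (c : ℂ), Matrix.single a b c = c • Matrix.single a b 1 := by
    intro a b c; rw [smul_single, smul_eq_mul, mul_one]
  simp only [Matrix.sum_apply]
  refine Finset.sum_congr rfl fun a _ => ?_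
  refine Finset.sum_congr rfl fun b _ => ?_
  rw [hstd a b (η a b), _root_.map_smul, Matrix.smul_apply, smul_eq_mul]
  rfl

lemma sum_perm4 {M : Type*} [AddCommMonoid M] {ι₁ ι₂ ι₃ ι₄ : Type*}
    [Fintype ι₁] [Fintype ι₂] [Fintype ι₃] [Fintype ι₄]
    (f : ι₁ → ι₂ → ι₃ → ι₄ → M) :
    ∑ a, ∑ b, ∑ k, ∑ p, f a b k p = ∑ p, ∑ k, ∑ a, ∑ b, f a b k p := by
  conv_lhs => enter [2, a, 2, b]; rw [Finset.sum_comm]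
  conv_lhs => enter [2, a]; rw [Finset.sum_comm]
  rw [Finset.sum_comm]
  conv_lhs => enter [2, p, 2, a]; rw [Finset.sum_comm]
  conv_lhs => enter [2, p]; rw [Finset.sum_comm]

lemma sum_perm4' {M : Type*} [AddCommMonoid M] {ι₁ ι₂ ι₃ ι₄ : Type*}
    [Fintype ι₁] [Fintype ι₂] [Fintype ι₃] [Fintype ι₄]
    (f : ι₁ → ι₂ → ι₃ → ι₄ → M) :
    ∑ a, ∑ b, ∑ p, ∑ k, f a b p k = ∑ p, ∑ k, ∑ b, ∑ a, f a b p k := by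
  rw [Finset.sum_comm]
  conv_lhs => enter [2, b]; rw [Finset.sum_comm]
  rw [Finset.sum_comm]
  conv_lhs => enter [2, p, 2, b]; rw [Finset.sum_comm]
  conv_lhs => enter [2, p]; rw [Finset.sum_comm]

lemma cp_psd {d m : ℕ} {Φ : Matrix (Fin d) (Fin d) ℂ → Matrix (Fin m) (Fin m) ℂ}
    (hlin : IsLinearMap ℂ Φ) (hchoi : (choi Φ).PosSemidef)
    {η : Matrix (Fin d) (Fin d) ℂ} (hη : η.PosSemidef) : (Φ η).PosSemidef := by
  obtain ⟨B, hB⟩ := posSemidef_iff_eq_transpose_mul_self.mp hη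
  obtain ⟨D, hD⟩ := posSemidef_iff_eq_transpose_mul_self.mp hchoi
  have hη' : ∀ a b, η a b = ∑ k, star (B k a) * B k b := by
    intro a b; rw [hB, Matrix.mul_apply]
    simp [Matrix.conjTranspose_apply]
  have hC : ∀ (x y : Fin m × Fin d), choi Φ x y = ∑ p, star (D p x) * D p y := by
    intro x y; rw [hD, Matrix.mul_apply]
    simp [Matrix.conjTranspose_apply]
  set G : Matrix ((Fin m × Fin d) × Fin d) (Fin m) ℂ :=
    fun q i => ∑ a, D q.1 (i, a) * B q.2 a with hG
  have key : Φ η = Gᴴ * G := by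
    ext i j
    rw [entry_formula hlin, Matrix.mul_apply]
    simp only [hη', hC, Matrix.conjTranspose_apply, hG]
    simp only [Finset.sum_mul, Finset.mul_sum]
    rw [sum_perm4' (fun a b p k => star (B k a) * B k b * (star (D p (i, a)) * D p (j, b)))]
    conv_rhs => rw [Fintype.sum_prod_type]
    refine Finset.sum_congr rfl fun p _ => ?_
    refine Finset.sum_congr rfl fun k _ => ?_
    erw [Matrix.conjTranspose_apply]
    simp only [star_sum, star_mul', Finset.sum_mul, Finset.mul_sum]
    refine Finset.sum_congr rfl fun b _ => ?_
    refine Finset.sum_congr rfl fun a _ => ?_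
    ring
  rw [key]
  exact posSemidef_conjTranspose_mul_self G

/-- The advantage of `ρ` in any subchannel discrimination task is at most
`1 + R_F(ρ)` times the best free success probability. -/
theorem robustness_bounds_discrimination {d m n : ℕ}
    (F : Set (Matrix (Fin d) (Fin d) ℂ)) (hF_sub : ∀ σ ∈ F, IsDensityMatrix σ)
    (hF_cpt : IsCompact F) (hF_conv : Convex ℝ F) (hF_full : ∃ σ ∈ F, σ.PosDef)
    (ρ : Matrix (Fin d) (Fin d) ℂ) (hρ : IsDensityMatrix ρ) (r : ℝ)
    (hr : genRobustness F ρ = r)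
    (hfin : ∃ s : ℝ, 0 ≤ s ∧ ∃ τ : Matrix (Fin d) (Fin d) ℂ, IsDensityMatrix τ ∧
      ((1 + s : ℝ)⁻¹ : ℂ) • (ρ + (s : ℂ) • τ) ∈ F)
    (Ψ : Fin n → Matrix (Fin d) (Fin d) ℂ → Matrix (Fin m) (Fin m) ℂ)
    (hΨ : ∀ i, IsSubchannel (Ψ i))
    (hΨsum : ∀ η : Matrix (Fin d) (Fin d) ℂ, (∑ i, Ψ i η).trace = η.trace)
    (M : Fin n → Matrix (Fin m) (Fin m) ℂ)
    (hM : ∀ i, (M i).PosSemidef) (hMsum : ∑ i, M i = 1) :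
    let p : Matrix (Fin d) (Fin d) ℂ → ℝ := fun η => ∑ i, (M i * Ψ i η).trace.re
    p ρ ≤ (1 + r) * sSup (p '' F) := by
  intro p
  set S : Set ℝ := { s : ℝ | 0 ≤ s ∧ ∃ τ : Matrix (Fin d) (Fin d) ℂ, IsDensityMatrix τ ∧
    ((1 + s : ℝ)⁻¹ : ℂ) • (ρ + (s : ℂ) • τ) ∈ F } with hS
  -- continuity of p
  have hcont : Continuous p := by
    apply continuous_finset_sum
    intro i _
    have hL : Continuous fun η => (M i * Ψ i η).trace := by
      let L : Matrix (Fin d) (Fin d) ℂ →ₗ[ℂ] ℂ :=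
        { toFun := fun η => (M i * Ψ i η).trace
          map_add' := by
            intro x y
            show (M i * Ψ i (x + y)).trace = (M i * Ψ i x).trace + (M i * Ψ i y).trace
            rw [(hΨ i).1.map_add, Matrix.mul_add, Matrix.trace_add]
          map_smul' := by
            intro c x
            show (M i * Ψ i (c • x)).trace = c • (M i * Ψ i x).trace
            rw [(hΨ i).1.map_smul, Matrix.mul_smul, Matrix.trace_smul] }
      exact L.continuous_of_finiteDimensional
    exact Complex.continuous_re.comp hL
  have hbdd : BddAbove (p '' F) := (hF_cpt.image hcont).bddAbove
  -- nonnegativity of p on PSD matrices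
  have hpnn : ∀ η : Matrix (Fin d) (Fin d) ℂ, η.PosSemidef → 0 ≤ p η := by
    intro η hη
    apply Finset.sum_nonneg
    intro i _
    exact trace_mul_re_nonneg (hM i) (cp_psd (hΨ i).1 (hΨ i).2.1 hη)
  set C : ℝ := sSup (p '' F) with hC
  have hC0 : 0 ≤ C := by
    obtain ⟨σ0, hσ0F, _⟩ := hF_full
    exact le_trans (hpnn σ0 (hF_sub σ0 hσ0F).1) (le_csSup hbdd ⟨σ0, hσ0F, rfl⟩)
  -- key inequality for every s in S
  have key : ∀ s ∈ S, p ρ ≤ (1 + s) * C := by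
    rintro s ⟨hs0, τ, hτ, hmem⟩
    have h1s : (0 : ℝ) < 1 + s := by linarith
    set σ : Matrix (Fin d) (Fin d) ℂ := ((1 + s : ℝ)⁻¹ : ℂ) • (ρ + (s : ℂ) • τ) with hσ
    have hpσ : p σ = (1 + s)⁻¹ * (p ρ + s * p τ) := by
      have hterm : ∀ i : Fin n, (M i * Ψ i σ).trace.re
          = (1 + s)⁻¹ * ((M i * Ψ i ρ).trace.re + s * (M i * Ψ i τ).trace.re) := by
        intro i
        have : Ψ i σ = ((1 + s : ℝ)⁻¹ : ℂ) • (Ψ i ρ + ((s : ℝ) : ℂ) • Ψ i τ) := by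
          rw [hσ, (hΨ i).1.map_smul, (hΨ i).1.map_add, (hΨ i).1.map_smul]
        rw [this, Matrix.mul_smul, Matrix.mul_add, Matrix.mul_smul, Matrix.trace_smul,
          Matrix.trace_add, Matrix.trace_smul]
        simp only [smul_eq_mul, ← Complex.ofReal_inv, Complex.re_ofReal_mul, Complex.add_re]
      simp only [p, hterm]
      rw [← Finset.mul_sum, Finset.sum_add_distrib, ← Finset.mul_sum]
    have hσF : σ ∈ F := hmem
    have hσle : p σ ≤ C := le_csSup hbdd ⟨σ, hσF, rfl⟩
    have hτnn : 0 ≤ p τ := hpnn τ hτ.1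
    have : (1 + s)⁻¹ * (p ρ + s * p τ) ≤ C := hpσ ▸ hσle
    have h2 : p ρ + s * p τ ≤ (1 + s) * C := by
      rw [← mul_le_mul_iff_right₀ h1s] at this
      calc p ρ + s * p τ = (1 + s) * ((1 + s)⁻¹ * (p ρ + s * p τ)) := by
            field_simp
        _ ≤ (1 + s) * C := this
    nlinarith [mul_nonneg hs0 hτnn]
  -- conclude using the infimum
  have hrS : r = sInf S := by rw [← hr]; rfl
  have hSne : S.Nonempty := hfin
  have hr0 : 0 ≤ r := by
    rw [hrS]
    exact le_csInf hSne fun s hs => hs.1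
  rcases eq_or_lt_of_le hC0 with hCz | hCpos
  · obtain ⟨s, hs⟩ := hSne
    have := key s hs
    rw [← hCz] at this ⊢
    simpa using le_trans this (by nlinarith [hs.1])
  · have hrge : (p ρ - C) / C ≤ r := by
      rw [hrS]
      refine le_csInf hSne fun s hs => ?_
      have := key s hs
      rw [div_le_iff₀ hCpos]
      nlinarith
    rw [div_le_iff₀ hCpos] at hrge
    nlinarith
end

section
/- Let F be a compact convex set of density matrices on ℂ^d containing a full-rank state and ρ a density matrix with R_F(ρ) < ∞. Then there exist subchannels Ψ_i(·) = (1/d) U_i (·) U_i† (with unitaries U_i, i = 1,…,d) and a POVM {M_i} such that Σ_i Tr(M_i Ψ_i(ρ)) ≥ (1 + R_F(ρ)) · max_{σ∈F} Σ_i Tr(M_i Ψ_i(σ)). -/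
open Matrix ComplexOrder

variable {d : ℕ}

local notation "Mat" => Matrix (Fin d) (Fin d) ℂ

lemma qf_expand (M : Mat) (v : Fin d → ℂ) :
    star v ⬝ᵥ M *ᵥ v = ∑ j, ∑ k, (starRingEnd ℂ) (v j) * M j k * v k := by
  simp [dotProduct, mulVec, Finset.mul_sum, mul_assoc]

lemma qnorm (v : Fin d → ℂ) : star v ⬝ᵥ v = ((∑ i, ‖v i‖^2 : ℝ) : ℂ) := by
  simp only [dotProduct, Pi.star_apply, Complex.ofReal_sum]
  refine Finset.sum_congr rfl fun i _ => ?_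
  rw [show star (v i) = (starRingEnd ℂ) (v i) from rfl, Complex.conj_mul']
  norm_cast

lemma qf_conj (M : Mat) (hM : M.IsHermitian) (v : Fin d → ℂ) :
    (starRingEnd ℂ) (star v ⬝ᵥ M *ᵥ v) = star v ⬝ᵥ M *ᵥ v := by
  rw [qf_expand]
  rw [map_sum]
  rw [Finset.sum_comm]
  refine Finset.sum_congr rfl fun j _ => ?_
  rw [map_sum]
  refine Finset.sum_congr rfl fun k _ => ?_
  have h : M j k = (starRingEnd ℂ) (M k j) := by
    conv_lhs => rw [← hM]
    rfl
  simp only [_root_.map_mul, Complex.conj_conj, h]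
  ring

lemma qf_im (M : Mat) (hM : M.IsHermitian) (v : Fin d → ℂ) :
    (star v ⬝ᵥ M *ᵥ v).im = 0 :=
  Complex.conj_eq_iff_im.mp (qf_conj M hM v)

lemma qf_norm_le (M : Mat) (v : Fin d → ℂ) :
    ‖star v ⬝ᵥ M *ᵥ v‖ ≤ (∑ j, ∑ k, ‖M j k‖) * ∑ i, ‖v i‖^2 := by
  rw [qf_expand, Finset.sum_mul]
  refine (norm_sum_le _ _).trans (Finset.sum_le_sum fun j _ => ?_)
  rw [Finset.sum_mul]
  refine (norm_sum_le _ _).trans (Finset.sum_le_sum fun k _ => ?_)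
  have h1 : ‖(starRingEnd ℂ) (v j) * M j k * v k‖ = ‖M j k‖ * (‖v j‖ * ‖v k‖) := by
    simp [norm_mul]; ring
  rw [h1]
  refine mul_le_mul_of_nonneg_left ?_ (norm_nonneg _)
  have hj : ‖v j‖^2 ≤ ∑ i, ‖v i‖^2 :=
    Finset.single_le_sum (f := fun i => ‖v i‖^2) (fun i _ => sq_nonneg _) (Finset.mem_univ j)
  have hk : ‖v k‖^2 ≤ ∑ i, ‖v i‖^2 :=
    Finset.single_le_sum (f := fun i => ‖v i‖^2) (fun i _ => sq_nonneg _) (Finset.mem_univ k)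
  nlinarith [norm_nonneg (v j), norm_nonneg (v k)]

lemma posSemidef_of_re (M : Mat) (hM : M.IsHermitian)
    (h : ∀ v, 0 ≤ (star v ⬝ᵥ M *ᵥ v).re) : M.PosSemidef := by
  refine Matrix.PosSemidef.of_dotProduct_mulVec_nonneg hM fun v => ?_
  rw [Complex.nonneg_iff]
  exact ⟨h v, (qf_im M hM v).symm⟩

lemma posDef_of_re (M : Mat) (hM : M.IsHermitian)
    (h : ∀ v, v ≠ 0 → 0 < (star v ⬝ᵥ M *ᵥ v).re) : M.PosDef := by
  refine Matrix.PosDef.of_dotProduct_mulVec_pos hM fun ⦃v⦄ hv => ?_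
  rw [Complex.pos_iff]
  exact ⟨h v hv, (qf_im M hM v).symm⟩

lemma real_smul_mat (r : ℝ) (M : Mat) : r • M = ((r : ℂ)) • M := by
  ext j k
  simp [Complex.real_smul]

lemma psd_smul (M : Mat) (hM : M.PosSemidef) {r : ℝ} (hr : 0 ≤ r) :
    ((r : ℂ) • M).PosSemidef := by
  refine Matrix.PosSemidef.of_dotProduct_mulVec_nonneg ?_ fun v => ?_
  · unfold Matrix.IsHermitian
    rw [conjTranspose_smul, hM.1]
    congr 1
    simp
  · rw [Matrix.smul_mulVec, dotProduct_smul]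
    exact smul_nonneg (by exact_mod_cast hr) (hM.dotProduct_mulVec_nonneg v)


-- continuity of quadratic form
lemma qf_re_continuous (M : Mat) :
    Continuous (fun v : Fin d → ℂ => (star v ⬝ᵥ M *ᵥ v).re) := by
  have : (fun v : Fin d → ℂ => (star v ⬝ᵥ M *ᵥ v).re)
      = fun v => (∑ j, ∑ k, (starRingEnd ℂ) (v j) * M j k * v k).re := by
    funext v; rw [qf_expand]
  rw [this]
  refine Complex.continuous_re.comp ?_
  refine continuous_finset_sum _ fun j _ => continuous_finset_sum _ fun k _ => ?_
  exact ((Complex.continuous_conj.comp (continuous_apply j)).mul continuous_const).mul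
    (continuous_apply k)

lemma qf_real_smul (M : Mat) (v : Fin d → ℂ) (a : ℝ) :
    star (a • v) ⬝ᵥ M *ᵥ (a • v) = (a:ℂ)^2 • (star v ⬝ᵥ M *ᵥ v) := by
  simp only [qf_expand]
  simp only [Pi.smul_apply, Complex.real_smul, smul_eq_mul, _root_.map_mul,
    Complex.conj_ofReal, Finset.mul_sum]
  refine Finset.sum_congr rfl fun j _ => Finset.sum_congr rfl fun k _ => ?_
  ring

lemma pd_lower_bound (hd : 0 < d) (M : Mat) (hM : M.PosDef) :
    ∃ c : ℝ, 0 < c ∧ ∀ v : Fin d → ℂ, c * (∑ i, ‖v i‖^2) ≤ (star v ⬝ᵥ M *ᵥ v).re := by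
  classical
  set q : (Fin d → ℂ) → ℝ := fun v => ∑ i, ‖v i‖^2 with hq
  set g : (Fin d → ℂ) → ℝ := fun v => (star v ⬝ᵥ M *ᵥ v).re with hg
  have hqc : Continuous q := by
    refine continuous_finset_sum _ fun i _ => ?_
    exact ((continuous_apply i).norm).pow 2
  have hgc : Continuous g := qf_re_continuous M
  set K : Set (Fin d → ℂ) := {v | q v = 1} with hK
  have hKc : IsCompact K := by
    have hclosed : IsClosed K := isClosed_eq hqc continuous_const
    have hbdd : Bornology.IsBounded K := by
      refine (Metric.isBounded_iff_subset_closedBall 0).2 ⟨1, fun v hv => ?_⟩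
      have hv1 : q v = 1 := hv
      have : ∀ i, ‖v i‖ ≤ 1 := by
        intro i
        have h2 : ‖v i‖^2 ≤ 1 := by
          rw [← hv1]
          exact Finset.single_le_sum (f := fun i => ‖v i‖^2)
            (fun i _ => sq_nonneg _) (Finset.mem_univ i)
        nlinarith [norm_nonneg (v i)]
      simp only [Metric.mem_closedBall, dist_zero_right]
      exact pi_norm_le_iff_of_nonneg zero_le_one |>.2 fun i => by simpa using this i
    exact Metric.isCompact_of_isClosed_isBounded hclosed hbdd
  have hKne : K.Nonempty := by
    refine ⟨Pi.single ⟨0, hd⟩ 1, ?_⟩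
    show q _ = 1
    simp only [hq]
    rw [Finset.sum_eq_single (⟨0, hd⟩ : Fin d)]
    · simp
    · intro b _ hb; simp [Pi.single_apply, hb]
    · simp
  obtain ⟨v0, hv0K, hmin⟩ := hKc.exists_isMinOn hKne hgc.continuousOn
  have hv0ne : v0 ≠ 0 := by
    intro h0
    have : q v0 = 1 := hv0K
    rw [h0] at this
    simp [hq] at this
  have hc : 0 < g v0 := by
    have := hM.dotProduct_mulVec_pos hv0ne
    rw [Complex.pos_iff] at this
    exact this.1
  refine ⟨g v0, hc, fun v => ?_⟩
  rcases eq_or_ne v 0 with rfl | hv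
  · simp [hq, hg]
  · have hqv : 0 < q v := by
      have : ∃ i, v i ≠ 0 := by
        by_contra hcon
        push_neg at hcon
        exact hv (funext hcon)
      obtain ⟨i, hi⟩ := this
      refine Finset.sum_pos' (fun i _ => sq_nonneg _) ⟨i, Finset.mem_univ i, ?_⟩
      exact pow_pos (norm_pos_iff.2 hi) 2
    set r : ℝ := Real.sqrt (q v) with hr
    have hrpos : 0 < r := Real.sqrt_pos.2 hqv
    have hr2 : r^2 = q v := Real.sq_sqrt hqv.le
    have huK : (r⁻¹ • v) ∈ K := by
      show q (r⁻¹ • v) = 1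
      have : q (r⁻¹ • v) = (r⁻¹)^2 * q v := by
        simp only [hq, Pi.smul_apply, norm_smul, Finset.mul_sum]
        refine Finset.sum_congr rfl fun i _ => ?_
        rw [mul_pow, Real.norm_eq_abs, sq_abs]
      rw [this, ← hr2]
      field_simp
    have hgu : g (r⁻¹ • v) = (r⁻¹)^2 * g v := by
      simp only [hg]
      rw [qf_real_smul, smul_eq_mul, Complex.mul_re]
      have h1 : ((r⁻¹:ℝ):ℂ)^2 = (((r⁻¹^2 : ℝ)):ℂ) := by norm_cast
      rw [h1, Complex.ofReal_re, Complex.ofReal_im]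
      ring
    have := hmin huK
    have h2 : g v0 ≤ (r⁻¹)^2 * g v := by rw [← hgu]; exact this
    have h3 : r^2 * g v0 ≤ g v := by
      have := mul_le_mul_of_nonneg_left h2 (sq_nonneg r)
      calc r^2 * g v0 ≤ r^2 * ((r⁻¹)^2 * g v) := this
        _ = g v := by field_simp
    calc g v0 * q v = r^2 * g v0 := by rw [hr2]; ring
      _ ≤ g v := h3


noncomputable def outer (v : Fin d → ℂ) : Matrix (Fin d) (Fin d) ℂ :=
  Matrix.of fun j k => v j * (starRingEnd ℂ) (v k)

lemma outer_psd (v : Fin d → ℂ) : (outer v).PosSemidef := by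
  refine Matrix.PosSemidef.of_dotProduct_mulVec_nonneg ?_ fun u => ?_
  · ext j k
    simp [outer, Matrix.conjTranspose_apply, mul_comm]
  · have h : star u ⬝ᵥ (outer v) *ᵥ u
        = (∑ j, (starRingEnd ℂ) (u j) * v j) * ∑ k, (starRingEnd ℂ) (v k) * u k := by
      rw [show (outer v) *ᵥ u = fun j => v j * ∑ k, (starRingEnd ℂ) (v k) * u k by
        funext j
        simp [outer, mulVec, dotProduct, Finset.mul_sum]
        exact Finset.sum_congr rfl fun k _ => by ring]
      simp only [dotProduct, Pi.star_apply, Complex.star_def, Finset.sum_mul]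
      refine Finset.sum_congr rfl fun j _ => by ring
    rw [h, show (∑ k, (starRingEnd ℂ) (v k) * u k)
        = (starRingEnd ℂ) (∑ j, (starRingEnd ℂ) (u j) * v j) by
      rw [map_sum]; exact Finset.sum_congr rfl fun j _ => by
        simp only [_root_.map_mul, Complex.conj_conj]; ring]
    rw [Complex.mul_conj]
    exact Complex.zero_le_real.mpr (Complex.normSq_nonneg _)

lemma trace_mul_outer (M : Mat) (v : Fin d → ℂ) :
    (M * outer v).trace = star v ⬝ᵥ M *ᵥ v := by
  rw [qf_expand]
  simp only [Matrix.trace, Matrix.diag, Matrix.mul_apply, outer, Matrix.of_apply]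
  refine Finset.sum_congr rfl fun j _ => Finset.sum_congr rfl fun k _ => by ring

lemma std_decomp (k j : Fin d) (c : ℂ) :
    Matrix.single k j c
      = c.re • Matrix.single k j 1 + c.im • (Complex.I • Matrix.single k j 1) := by
  ext a b
  simp only [Matrix.add_apply, Matrix.smul_apply, Matrix.single, Matrix.of_apply,
    smul_eq_mul, Complex.real_smul]
  by_cases h : k = a ∧ j = b
  · simp only [if_pos h, mul_one]
    rw [eq_comm, Complex.ext_iff]
    simp
  · simp [if_neg h]

lemma repr_f (f : Mat →L[ℝ] ℝ) :
    ∃ X : Mat, ∀ A : Mat, ((X * A).trace).re = f A := by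
  classical
  refine ⟨Matrix.of fun j k =>
    (⟨f (Matrix.single k j 1), -(f (Complex.I • Matrix.single k j 1))⟩ : ℂ),
    fun A => ?_⟩
  have hA : A = ∑ k, ∑ j, Matrix.single k j (A k j) :=
    Matrix.matrix_eq_sum_single A
  have hf : f A = ∑ k, ∑ j, ((A k j).re * f (Matrix.single k j 1)
      + (A k j).im * f (Complex.I • Matrix.single k j 1)) := by
    conv_lhs => rw [hA]
    rw [map_sum]
    refine Finset.sum_congr rfl fun k _ => ?_
    rw [map_sum]
    refine Finset.sum_congr rfl fun j _ => ?_
    rw [std_decomp k j (A k j), map_add, _root_.map_smul, _root_.map_smul]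
    rfl
  rw [hf]
  have htr : ((Matrix.of fun j k =>
      (⟨f (Matrix.single k j 1), -(f (Complex.I • Matrix.single k j 1))⟩ : ℂ) :
        Mat) * A).trace = ∑ j, ∑ k,
      ((⟨f (Matrix.single k j 1), -(f (Complex.I • Matrix.single k j 1))⟩ : ℂ)
        * A k j) := by
    simp [Matrix.trace, Matrix.diag, Matrix.mul_apply]
  rw [htr, Complex.re_sum]
  rw [Finset.sum_comm]
  refine Finset.sum_congr rfl fun k _ => ?_
  rw [Complex.re_sum]
  refine Finset.sum_congr rfl fun j _ => ?_
  rw [Complex.mul_re]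
  show _ * _ - _ * _ = _
  simp only []
  ring

noncomputable def hermPart (X : Matrix (Fin d) (Fin d) ℂ) : Matrix (Fin d) (Fin d) ℂ :=
  (2⁻¹ : ℂ) • (X + Xᴴ)

lemma hermPart_isHermitian (X : Mat) : (hermPart X).IsHermitian := by
  unfold hermPart Matrix.IsHermitian
  rw [conjTranspose_smul, conjTranspose_add, conjTranspose_conjTranspose]
  rw [show star (2⁻¹ : ℂ) = (2⁻¹ : ℂ) by simp]
  rw [add_comm]

lemma re_trace_hermPart (X A : Mat) (hA : A.IsHermitian) :
    (((hermPart X) * A).trace).re = (((X : Mat) * A).trace).re := by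
  unfold hermPart
  rw [Matrix.smul_mul, Matrix.trace_smul, Matrix.add_mul, Matrix.trace_add]
  have h : (Xᴴ * A).trace = (starRingEnd ℂ) ((X * A).trace) := by
    have h1 : Xᴴ * A = (A * X)ᴴ := by rw [conjTranspose_mul, hA.eq]
    rw [h1, Matrix.trace_conjTranspose, Matrix.trace_mul_comm]
    rfl
  rw [h]
  rw [smul_eq_mul, Complex.mul_re]
  have h2 : ((X * A).trace + (starRingEnd ℂ) ((X * A).trace)).re = 2 * ((X * A).trace).re := by
    simp [Complex.add_re]; ring
  have h3 : ((X * A).trace + (starRingEnd ℂ) ((X * A).trace)).im = 0 := by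
    simp [Complex.add_im]
  rw [h2, h3]
  norm_num [Complex.inv_re, Complex.inv_im, Complex.normSq]
  ring

lemma hermPart_linear (a b : ℝ) (X Y : Mat) :
    hermPart (a • X + b • Y) = a • hermPart X + b • hermPart Y := by
  unfold hermPart
  rw [conjTranspose_add, conjTranspose_smul, conjTranspose_smul]
  rw [show star (a : ℝ) = a from rfl, show star (b : ℝ) = b from rfl]
  rw [smul_add, smul_add, smul_add]
  module

lemma hermPart_of_hermitian (X : Mat) (hX : X.IsHermitian) : hermPart X = X := by
  unfold hermPart
  rw [hX.eq, smul_add]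
  module

lemma qnonneg (v : Fin d → ℂ) : 0 ≤ ∑ i, ‖v i‖^2 :=
  Finset.sum_nonneg fun i _ => sq_nonneg _

lemma qpos (v : Fin d → ℂ) (hv : v ≠ 0) : 0 < ∑ i, ‖v i‖^2 := by
  have : ∃ i, v i ≠ 0 := by
    by_contra hcon
    push_neg at hcon
    exact hv (funext hcon)
  obtain ⟨i, hi⟩ := this
  exact Finset.sum_pos' (fun i _ => sq_nonneg _)
    ⟨i, Finset.mem_univ i, pow_pos (norm_pos_iff.2 hi) 2⟩

lemma psd_real_smul (M : Mat) (hM : M.PosSemidef) {r : ℝ} (hr : 0 ≤ r) :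
    (r • M).PosSemidef := by
  rw [real_smul_mat]; exact psd_smul M hM hr

lemma qf_add (A B : Mat) (v : Fin d → ℂ) :
    star v ⬝ᵥ (A + B) *ᵥ v = star v ⬝ᵥ A *ᵥ v + star v ⬝ᵥ B *ᵥ v := by
  rw [Matrix.add_mulVec, dotProduct_add]

lemma qf_sub (A B : Mat) (v : Fin d → ℂ) :
    star v ⬝ᵥ (A - B) *ᵥ v = star v ⬝ᵥ A *ᵥ v - star v ⬝ᵥ B *ᵥ v := by
  rw [Matrix.sub_mulVec, dotProduct_sub]

lemma qf_real_smul_mat (A : Mat) (r : ℝ) (v : Fin d → ℂ) :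
    (star v ⬝ᵥ (r • A) *ᵥ v).re = r * (star v ⬝ᵥ A *ᵥ v).re := by
  rw [real_smul_mat, Matrix.smul_mulVec, dotProduct_smul, smul_eq_mul,
    Complex.re_ofReal_mul]

lemma herm_smul_real (A : Mat) (hA : A.IsHermitian) (r : ℝ) : (r • A).IsHermitian := by
  unfold Matrix.IsHermitian
  rw [conjTranspose_smul, hA.eq]
  congr 1

lemma pd_trace_re_pos (hd : 0 < d) (A : Mat) (hA : A.PosDef) : 0 < A.trace.re := by
  have hdiag : ∀ j, 0 < (A j j).re := by
    intro j
    have hs : (Pi.single j 1 : Fin d → ℂ) ≠ 0 := by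
      intro h
      have := congrFun h j
      simp at this
    have hpos := hA.dotProduct_mulVec_pos hs
    rw [Complex.pos_iff] at hpos
    have hqf : star (Pi.single j 1 : Fin d → ℂ) ⬝ᵥ A *ᵥ (Pi.single j 1) = A j j := by
      rw [qf_expand]
      have : ∀ a b : Fin d,
          (starRingEnd ℂ) ((Pi.single j 1 : Fin d → ℂ) a) * A a b * (Pi.single j 1 : Fin d → ℂ) b
          = if a = j ∧ b = j then A j j else 0 := by
        intro a b
        by_cases ha : a = j
        · by_cases hb : b = j
          · simp [Pi.single_apply, ha, hb]
          · simp [Pi.single_apply, ha, hb]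
        · simp [Pi.single_apply, ha]
      simp only [this]
      simp [ite_and, Finset.sum_ite_eq']
    rw [hqf] at hpos
    exact hpos.1
  have : A.trace.re = ∑ j, (A j j).re := by
    simp [Matrix.trace, Matrix.diag, Complex.re_sum]
  rw [this]
  exact Finset.sum_pos (fun j _ => hdiag j) ⟨⟨0, hd⟩, Finset.mem_univ _⟩

lemma one_perturb (H : Mat) (hH : H.IsHermitian) :
    ∃ ε : ℝ, 0 < ε ∧ ((1 : Mat) - ε • H).PosSemidef ∧ ((1 : Mat) + ε • H).PosSemidef := by
  set C : ℝ := ∑ j, ∑ k, ‖H j k‖ with hC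
  have hC0 : 0 ≤ C := Finset.sum_nonneg fun j _ => Finset.sum_nonneg fun k _ => norm_nonneg _
  have key : ∀ v : Fin d → ℂ,
      |(C + 1)⁻¹ * (star v ⬝ᵥ H *ᵥ v).re| ≤ ∑ i, ‖v i‖^2 := by
    intro v
    have hbound : |(star v ⬝ᵥ H *ᵥ v).re| ≤ C * ∑ i, ‖v i‖^2 :=
      le_trans (Complex.abs_re_le_norm _) (qf_norm_le H v)
    rw [abs_mul, abs_of_nonneg (by positivity : (0:ℝ) ≤ (C+1)⁻¹)]
    have h1 : (C + 1)⁻¹ * |(star v ⬝ᵥ H *ᵥ v).re| ≤ (C+1)⁻¹ * (C * ∑ i, ‖v i‖^2) :=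
      mul_le_mul_of_nonneg_left hbound (by positivity)
    refine h1.trans ?_
    have hfrac : (C+1)⁻¹ * C ≤ 1 := by
      rw [inv_mul_le_iff₀ (by positivity)]
      linarith
    nlinarith [qnonneg v]
  refine ⟨(C + 1)⁻¹, by positivity, ?_, ?_⟩
  · refine posSemidef_of_re _ ((Matrix.isHermitian_one).sub (herm_smul_real H hH _)) (fun v => ?_)
    rw [qf_sub, Complex.sub_re, Matrix.one_mulVec, qnorm, Complex.ofReal_re,
      qf_real_smul_mat]
    have := abs_le.1 (key v)
    linarith [this.2]
  · refine posSemidef_of_re _ ((Matrix.isHermitian_one).add (herm_smul_real H hH _)) (fun v => ?_)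
    rw [qf_add, Complex.add_re, Matrix.one_mulVec, qnorm, Complex.ofReal_re,
      qf_real_smul_mat]
    have := abs_le.1 (key v)
    linarith [this.1]

lemma entry_continuous (j k : Fin d) : Continuous fun A : Mat => A j k :=
  (continuous_apply k).comp (continuous_apply j)

lemma s1_open (hd : 0 < d) : IsOpen {A : Mat | (hermPart A).PosDef} := by
  rw [isOpen_iff_forall_mem_open]
  intro A₀ hA₀
  obtain ⟨c, hc, hcb⟩ := pd_lower_bound hd _ hA₀
  set g : Mat → ℝ := fun A => ∑ j, ∑ k, ‖hermPart A j k - hermPart A₀ j k‖ with hg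
  have hgc : Continuous g := by
    refine continuous_finset_sum _ fun j _ => continuous_finset_sum _ fun k _ => ?_
    refine Continuous.norm (Continuous.sub ?_ continuous_const)
    have : (fun A : Mat => hermPart A j k)
        = fun A : Mat => (2⁻¹ : ℂ) * (A j k + (starRingEnd ℂ) (A k j)) := by
      funext A
      simp [hermPart, Matrix.smul_apply, Matrix.add_apply, Matrix.conjTranspose_apply,
        smul_eq_mul]
    rw [this]
    exact continuous_const.mul ((entry_continuous j k).add
      (Complex.continuous_conj.comp (entry_continuous k j)))
  refine ⟨{A | g A < c}, fun A hAg => ?_, isOpen_lt hgc continuous_const, by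
    simp only [Set.mem_setOf_eq, hg]
    simpa using hc⟩
  have hΔ : hermPart A = hermPart A₀ + (hermPart A - hermPart A₀) := by abel
  refine posDef_of_re _ (hermPart_isHermitian A) (fun v hv => ?_)
  rw [hΔ, qf_add, Complex.add_re]
  have h1 : c * ∑ i, ‖v i‖^2 ≤ (star v ⬝ᵥ (hermPart A₀) *ᵥ v).re := hcb v
  have h2 : |(star v ⬝ᵥ (hermPart A - hermPart A₀) *ᵥ v).re| ≤ g A * ∑ i, ‖v i‖^2 := by
    refine le_trans (Complex.abs_re_le_norm _) ((qf_norm_le _ v).trans ?_)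
    refine mul_le_mul_of_nonneg_right ?_ (qnonneg v)
    refine le_of_eq ?_
    simp only [hg, Matrix.sub_apply]
  have h3 := (abs_le.1 h2).1
  have hq := qpos v hv
  have hga : g A < c := hAg
  nlinarith

lemma pd_real_smul (M : Mat) (hM : M.PosDef) {r : ℝ} (hr : 0 < r) : (r • M).PosDef := by
  refine posDef_of_re _ (herm_smul_real M hM.1 r) (fun v hv => ?_)
  rw [qf_real_smul_mat]
  have := hM.dotProduct_mulVec_pos hv
  rw [Complex.pos_iff] at this
  exact mul_pos hr this.1

lemma s1_convex : Convex ℝ {A : Mat | (hermPart A).PosDef} := by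
  intro A hA B hB a b ha hb hab
  simp only [Set.mem_setOf_eq] at *
  rw [hermPart_linear]
  rcases eq_or_lt_of_le ha with rfl | ha'
  · rw [show b = 1 by linarith]
    simpa using hB
  rcases eq_or_lt_of_le hb with rfl | hb'
  · rw [show a = 1 by linarith]
    simpa using hA
  exact (pd_real_smul _ hA ha').add (pd_real_smul _ hB hb')

lemma herm_comb (r : ℝ) (σ ρ : Mat) (hσ : σ.IsHermitian) (hρ : ρ.IsHermitian) :
    (r • σ - ρ).IsHermitian :=
  (herm_smul_real σ hσ r).sub hρ

theorem duality (hd : 0 < d)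
    (F : Set (Matrix (Fin d) (Fin d) ℂ)) (hF_sub : ∀ σ ∈ F, IsDensityMatrix σ)
    (hF_conv : Convex ℝ F) (hF_ne : F.Nonempty)
    (ρ : Matrix (Fin d) (Fin d) ℂ) (hρ : IsDensityMatrix ρ)
    (hfin : ∃ s : ℝ, 0 ≤ s ∧ ∃ τ : Matrix (Fin d) (Fin d) ℂ, IsDensityMatrix τ ∧
      ((1 + s : ℝ)⁻¹ : ℂ) • (ρ + (s : ℂ) • τ) ∈ F) :
    ∃ X : Matrix (Fin d) (Fin d) ℂ, X.PosSemidef ∧ 0 < X.trace.re ∧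
      ∀ σ ∈ F, (1 + genRobustness F ρ) * ((X * σ).trace).re ≤ ((X * ρ).trace).re := by
  classical
  set R := genRobustness F ρ with hR
  set S := { s : ℝ | 0 ≤ s ∧ ∃ τ : Matrix (Fin d) (Fin d) ℂ, IsDensityMatrix τ ∧
    ((1 + s : ℝ)⁻¹ : ℂ) • (ρ + (s : ℂ) • τ) ∈ F } with hSdef
  have hSbdd : BddBelow S := ⟨0, fun s hs => hs.1⟩
  have hR0 : 0 ≤ R := le_csInf hfin (fun s hs => hs.1)
  set s1 : Set (Matrix (Fin d) (Fin d) ℂ) := {A | (hermPart A).PosDef} with hs1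
  set K : Set (Matrix (Fin d) (Fin d) ℂ) := (fun σ => (1 + R) • σ - ρ) '' F with hKdef
  -- disjointness
  have hdisj : Disjoint s1 K := by
    rw [Set.disjoint_right]
    rintro A ⟨σ, hσF, rfl⟩ hAs1
    have hσd := hF_sub σ hσF
    set A := (1 + R) • σ - ρ with hA
    have hAherm : A.IsHermitian := herm_comb _ _ _ hσd.1.1 hρ.1.1
    have hApd : A.PosDef := by
      have : hermPart A = A := hermPart_of_hermitian A hAherm
      rwa [hs1, Set.mem_setOf_eq, this] at hAs1
    -- trace of A is R
    have htrA : A.trace.re = R := by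
      rw [hA, Matrix.trace_sub, Matrix.trace_smul, hσd.2, hρ.2]
      simp
    have hRpos : 0 < R := htrA ▸ pd_trace_re_pos hd A hApd
    -- find smaller element of S
    obtain ⟨c, hc, hcb⟩ := pd_lower_bound hd A hApd
    set Cσ : ℝ := (∑ j, ∑ k, ‖σ j k‖) + 1 with hCσ
    have hCσ0 : 0 < Cσ := by
      have : 0 ≤ ∑ j, ∑ k, ‖σ j k‖ :=
        Finset.sum_nonneg fun j _ => Finset.sum_nonneg fun k _ => norm_nonneg _
      linarith
    set ε : ℝ := min (R/2) (c/Cσ) with hε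
    have hε0 : 0 < ε := lt_min (by linarith) (div_pos hc hCσ0)
    have hεR : ε < R := lt_of_le_of_lt (min_le_left _ _) (by linarith)
    have hεc : ε * Cσ ≤ c := by
      have := min_le_right (R/2) (c/Cσ)
      calc ε * Cσ ≤ (c/Cσ) * Cσ := mul_le_mul_of_nonneg_right this hCσ0.le
        _ = c := by field_simp
    set s' : ℝ := R - ε with hs'
    have hs'0 : 0 < s' := by simp only [hs']; linarith
    set B : Matrix (Fin d) (Fin d) ℂ := (1 + s') • σ - ρ with hB
    have hBA : B = A - ε • σ := by
      rw [hB, hA, hs']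
      rw [show (1 + (R - ε)) • σ = (1 + R) • σ - ε • σ by
        rw [← sub_smul]; congr 1; ring]
      abel
    have hBpsd : B.PosSemidef := by
      refine posSemidef_of_re _ (herm_comb _ _ _ hσd.1.1 hρ.1.1) (fun v => ?_)
      rw [hBA, qf_sub, Complex.sub_re, qf_real_smul_mat]
      have h1 := hcb v
      have h2 : |(star v ⬝ᵥ σ *ᵥ v).re| ≤ (Cσ - 1) * ∑ i, ‖v i‖^2 := by
        refine le_trans (Complex.abs_re_le_norm _) ((qf_norm_le _ v).trans ?_)
        refine mul_le_mul_of_nonneg_right (by simp [hCσ]) (qnonneg v)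
      have h3 := (abs_le.1 h2).2
      have hq := qnonneg v
      nlinarith
    -- s' ∈ S
    have hs'S : s' ∈ S := by
      refine ⟨hs'0.le, ((s' : ℝ) : ℂ)⁻¹ • B, ⟨?_, ?_⟩, ?_⟩
      · rw [← Complex.ofReal_inv, ← real_smul_mat]
        exact psd_real_smul B hBpsd (by positivity)
      · rw [Matrix.trace_smul, hB, Matrix.trace_sub, Matrix.trace_smul, hσd.2, hρ.2]
        rw [Complex.real_smul]
        push_cast
        field_simp
        rw [smul_eq_mul, add_sub_cancel_left, one_div, inv_mul_cancel₀ (by exact_mod_cast hs'0.ne')]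
      · have h1 : ((s' : ℝ) : ℂ) • (((s' : ℝ) : ℂ)⁻¹ • B) = B := by
          rw [smul_smul, mul_inv_cancel₀ (by exact_mod_cast hs'0.ne'), one_smul]
        rw [h1]
        have h2 : ρ + B = (1 + s') • σ := by rw [hB]; abel
        rw [h2, real_smul_mat, smul_smul]
        rw [inv_mul_cancel₀ (by
          intro hzero
          rw [Complex.ofReal_eq_zero] at hzero
          linarith : ((1 + s' : ℝ) : ℂ) ≠ 0)]
        rw [one_smul]
        exact hσF
    have : R ≤ s' := csInf_le hSbdd hs'S
    simp only [hs'] at this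
    linarith
  -- separation
  have hKconv : Convex ℝ K := by
    rintro A ⟨σA, hσA, rfl⟩ B ⟨σB, hσB, rfl⟩ a b ha hb hab
    refine ⟨a • σA + b • σB, hF_conv hσA hσB ha hb hab, ?_⟩
    have hb' : b = 1 - a := by linarith
    subst hb'
    simp only []
    module
  obtain ⟨f, u, hfs1, hfK⟩ := geometric_hahn_banach_open s1_convex (s1_open hd) hKconv hdisj
  -- membership helpers for s1
  have hmem1 : ∀ (A : Matrix (Fin d) (Fin d) ℂ), A.PosSemidef → ∀ ε : ℝ, 0 < ε →
      (A + ε • (1 : Matrix (Fin d) (Fin d) ℂ)) ∈ s1 := by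
    intro A hA ε hε
    have hherm : (A + ε • (1 : Matrix (Fin d) (Fin d) ℂ)).IsHermitian :=
      hA.1.add (herm_smul_real _ (Matrix.isHermitian_one) ε)
    rw [hs1, Set.mem_setOf_eq, hermPart_of_hermitian _ hherm]
    refine posDef_of_re _ hherm (fun v hv => ?_)
    rw [qf_add, Complex.add_re, qf_real_smul_mat, Matrix.one_mulVec, qnorm,
      Complex.ofReal_re]
    have h1 : 0 ≤ (star v ⬝ᵥ A *ᵥ v).re := by
      have := hA.dotProduct_mulVec_nonneg v
      rw [Complex.nonneg_iff] at this
      exact this.1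
    have h2 := qpos v hv
    nlinarith
  -- (i) f is nonpositive on PSD matrices
  have hfpsd : ∀ (A : Matrix (Fin d) (Fin d) ℂ), A.PosSemidef → f A ≤ 0 := by
    have step : ∀ (A : Matrix (Fin d) (Fin d) ℂ), A.PosSemidef → f A ≤ u := by
      intro A hA
      by_contra hcon
      push_neg at hcon
      set δ := f A - u with hδ
      have hδ0 : 0 < δ := by simp only [hδ]; linarith
      set ε := δ / (2 * (|f 1| + 1)) with hεd
      have hε0 : 0 < ε := by positivity
      have := hfs1 _ (hmem1 A hA ε hε0)
      rw [map_add, ContinuousLinearMap.map_smul] at this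
      have habs : ε * f 1 ≥ -(ε * |f 1|) := by
        have := neg_abs_le (f 1)
        nlinarith
      have hbd : ε * |f 1| ≤ δ / 2 := by
        rw [hεd]
        rw [div_mul_eq_mul_div, div_le_div_iff₀ (by positivity) (by norm_num)]
        nlinarith [abs_nonneg (f 1)]
      simp only [smul_eq_mul] at this
      nlinarith
    intro A hA
    by_contra hcon
    push_neg at hcon
    have hscale : ∀ t : ℝ, 0 < t → t * f A ≤ u := by
      intro t ht
      have hpsd : (t • A).PosSemidef := psd_real_smul A hA ht.le
      have := step _ hpsd
      rwa [ContinuousLinearMap.map_smul, smul_eq_mul] at this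
    have := hscale ((|u| + 1) / f A) (by positivity)
    rw [div_mul_cancel₀ _ (by linarith)] at this
    have := le_abs_self u
    linarith
  -- u is positive-ish facts
  have hu_lt : ∀ t : ℝ, 0 < t → t * f 1 < u := by
    intro t ht
    have := hfs1 _ (hmem1 0 (Matrix.PosSemidef.zero) t ht)
    rw [map_add, ContinuousLinearMap.map_smul, map_zero, smul_eq_mul] at this
    simpa using this
  have hf1 : f 1 ≤ 0 := hfpsd 1 (Matrix.PosSemidef.one)
  obtain ⟨σ₀, hσ₀F⟩ := hF_ne
  have hKne : ((1 + R) • σ₀ - ρ) ∈ K := ⟨σ₀, hσ₀F, rfl⟩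
  have hf1' : f 1 < 0 := by
    rcases lt_or_eq_of_le hf1 with h | h
    · exact h
    -- f 1 = 0 : derive that f vanishes on all hermitian matrices, contradiction
    exfalso
    have hvanish : ∀ (H : Matrix (Fin d) (Fin d) ℂ), H.IsHermitian → f H = 0 := by
      intro H hH
      obtain ⟨ε, hε0, hsub, hadd⟩ := one_perturb H hH
      have h1 := hfpsd _ hsub
      have h2 := hfpsd _ hadd
      rw [map_sub, ContinuousLinearMap.map_smul, smul_eq_mul, h] at h1
      rw [map_add, ContinuousLinearMap.map_smul, smul_eq_mul, h] at h2
      nlinarith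
    have hherm : ((1 + R) • σ₀ - ρ).IsHermitian :=
      herm_comb _ _ _ (hF_sub σ₀ hσ₀F).1.1 hρ.1.1
    have h0 : f ((1 + R) • σ₀ - ρ) = 0 := hvanish _ hherm
    have hub := hfK _ hKne
    rw [h0] at hub
    have := hu_lt 1 one_pos
    rw [one_mul] at this
    linarith
  have hu0 : 0 ≤ u := by
    by_contra hcon
    push_neg at hcon
    have h2 := hu_lt (u / (2 * f 1)) (by
      apply div_pos_of_neg_of_neg hcon
      linarith)
    have heq : (u / (2 * f 1)) * f 1 = u / 2 := by
      rw [div_mul_eq_mul_div, mul_comm (2 : ℝ) (f 1), ← div_div,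
        mul_div_assoc, div_self hf1'.ne, mul_one]
    rw [heq] at h2
    linarith
  -- key inequality
  have hkey : ∀ σ ∈ F, (1 + R) * (- f σ) ≤ - f ρ := by
    intro σ hσF
    have hub := hfK _ ⟨σ, hσF, rfl⟩
    rw [map_sub, ContinuousLinearMap.map_smul, smul_eq_mul] at hub
    nlinarith
  -- representation
  obtain ⟨X₀, hX₀⟩ := repr_f (-f)
  have hX₀' : ∀ A, ((X₀ * A).trace).re = - f A := by
    intro A
    rw [hX₀]
    rfl
  set X := hermPart X₀ with hX
  have hXre : ∀ A : Matrix (Fin d) (Fin d) ℂ, A.IsHermitian → ((X * A).trace).re = - f A := by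
    intro A hA
    rw [hX, re_trace_hermPart X₀ A hA, hX₀']
  refine ⟨X, ?_, ?_, ?_⟩
  · refine posSemidef_of_re _ (hermPart_isHermitian X₀) (fun v => ?_)
    have h1 : star v ⬝ᵥ X *ᵥ v = (X * outer v).trace := (trace_mul_outer X v).symm
    rw [h1]
    have h2 := hXre (outer v) (outer_psd v).1
    rw [h2]
    have := hfpsd _ (outer_psd v)
    linarith
  · have h1 : X.trace = (X * 1).trace := by rw [mul_one]
    rw [h1, hXre 1 (Matrix.isHermitian_one)]
    linarith
  · intro σ hσF
    rw [hXre σ (hF_sub σ hσF).1.1, hXre ρ hρ.1.1]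
    exact hkey σ hσF

lemma perm_left (e : Fin d ≃ Fin d) (N : Mat) :
    (1 : Mat).submatrix ⇑e id * N = N.submatrix ⇑e id := by
  have h := Matrix.submatrix_mul_equiv (1 : Mat) N ⇑e (Equiv.refl (Fin d)) id
  simpa using h

lemma perm_right (e : Fin d ≃ Fin d) (N : Mat) :
    N * (1 : Mat).submatrix id ⇑e = N.submatrix id ⇑e := by
  have h := Matrix.submatrix_mul_equiv N (1 : Mat) id (Equiv.refl (Fin d)) ⇑e
  simpa using h

lemma perm_conjTranspose (e : Fin d ≃ Fin d) :
    ((1 : Mat).submatrix ⇑e id)ᴴ = (1 : Mat).submatrix id ⇑e := by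
  rw [Matrix.conjTranspose_submatrix, Matrix.conjTranspose_one]

lemma perm_swap (e : Fin d ≃ Fin d) :
    (1 : Mat).submatrix id ⇑e = (1 : Mat).submatrix ⇑e.symm id := by
  ext j k
  simp only [Matrix.submatrix_apply, id_eq, Matrix.one_apply]
  by_cases h : j = e k
  · simp [h]
  · rw [if_neg h, if_neg]
    intro hc
    exact h (by rw [← hc]; simp)

lemma diag_submatrix (e : Fin d ≃ Fin d) (g : Fin d → ℂ) :
    (Matrix.diagonal g).submatrix ⇑e ⇑e = Matrix.diagonal (g ∘ e) := by
  ext j k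
  simp only [Matrix.submatrix_apply, Matrix.diagonal_apply, Function.comp_apply]
  by_cases h : j = k
  · simp [h]
  · rw [if_neg (fun hc => h (e.injective hc)), if_neg h]

lemma perm_unitary (e : Fin d ≃ Fin d) :
    (1 : Mat).submatrix ⇑e id ∈ Matrix.unitaryGroup (Fin d) ℂ := by
  rw [Matrix.mem_unitaryGroup_iff]
  rw [show star ((1 : Mat).submatrix ⇑e id) = ((1 : Mat).submatrix ⇑e id)ᴴ from rfl]
  rw [perm_conjTranspose, perm_right, Matrix.submatrix_submatrix]
  rw [show (⇑e ∘ id : Fin d → Fin d) = ⇑e from rfl, show (id ∘ ⇑e : Fin d → Fin d) = ⇑e from rfl]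
  exact Matrix.submatrix_one_equiv e

-- conjugation of diagonal-ish matrix by permutation-transpose
lemma perm_conj (e : Fin d ≃ Fin d) (N : Mat) :
    ((1 : Mat).submatrix ⇑e id)ᴴ * N * ((1 : Mat).submatrix ⇑e id)
      = N.submatrix ⇑e.symm ⇑e.symm := by
  rw [perm_conjTranspose, perm_swap, perm_left]
  rw [show (1 : Mat).submatrix ⇑e id = (1 : Mat).submatrix id ⇑e.symm by
    rw [perm_swap]; simp]
  rw [perm_right, Matrix.submatrix_submatrix]
  rfl

/-- There is a unitary-covariant subchannel discrimination task together with a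
POVM in which `ρ` achieves at least `1 + R_F(ρ)` times the best free success
probability. -/
theorem robustness_advantage_achieved {d : ℕ}
    (F : Set (Matrix (Fin d) (Fin d) ℂ)) (hF_sub : ∀ σ ∈ F, IsDensityMatrix σ)
    (hF_cpt : IsCompact F) (hF_conv : Convex ℝ F) (hF_full : ∃ σ ∈ F, σ.PosDef)
    (ρ : Matrix (Fin d) (Fin d) ℂ) (hρ : IsDensityMatrix ρ)
    (hfin : ∃ s : ℝ, 0 ≤ s ∧ ∃ τ : Matrix (Fin d) (Fin d) ℂ, IsDensityMatrix τ ∧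
      ((1 + s : ℝ)⁻¹ : ℂ) • (ρ + (s : ℂ) • τ) ∈ F) :
    ∃ U : Fin d → Matrix (Fin d) (Fin d) ℂ,
      (∀ i, U i ∈ Matrix.unitaryGroup (Fin d) ℂ) ∧
      ∃ M : Fin d → Matrix (Fin d) (Fin d) ℂ,
        (∀ i, (M i).PosSemidef) ∧ (∑ i, M i = 1) ∧
        (let Ψ : Fin d → Matrix (Fin d) (Fin d) ℂ → Matrix (Fin d) (Fin d) ℂ :=
            fun i η => ((d : ℂ)⁻¹) • (U i * η * (U i)ᴴ)
         let p : Matrix (Fin d) (Fin d) ℂ → ℝ := fun η => ∑ i, (M i * Ψ i η).trace.re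
         (1 + genRobustness F ρ) * sSup (p '' F) ≤ p ρ) := by
  classical
  rcases Nat.eq_zero_or_pos d with hd0 | hd
  · exfalso
    obtain ⟨s, _, τ, ⟨_, hτtr⟩, _⟩ := hfin
    subst hd0
    rw [Matrix.trace] at hτtr
    simp at hτtr
  obtain ⟨σ₀, hσ₀F, -⟩ := hF_full
  obtain ⟨X, hXpsd, hXtr, hXineq⟩ := duality hd F hF_sub hF_conv ⟨σ₀, hσ₀F⟩ ρ hρ hfin
  haveI : NeZero d := ⟨hd.ne'⟩
  set hH : X.IsHermitian := hXpsd.1 with hhH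
  set lam : Fin d → ℝ := hH.eigenvalues with hlam
  set V : Matrix (Fin d) (Fin d) ℂ := (hH.eigenvectorUnitary : Matrix (Fin d) (Fin d) ℂ)
    with hV
  have hlam0 : ∀ j, 0 ≤ lam j := fun j => hXpsd.eigenvalues_nonneg j
  set t : ℝ := ∑ j, lam j with ht
  have hXdiag : X = V * Matrix.diagonal (RCLike.ofReal ∘ lam) * Vᴴ := by
    rw [hV, hlam, ← Matrix.star_eq_conjTranspose]
    exact hH.spectral_theorem
  have hVV : Vᴴ * V = 1 := by
    rw [← Matrix.star_eq_conjTranspose]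
    exact Unitary.star_mul_self_of_mem hH.eigenvectorUnitary.2
  have htX : X.trace = (t : ℂ) := by
    rw [hXdiag, Matrix.trace_mul_cycle, hVV, Matrix.one_mul, Matrix.trace_diagonal]
    rw [ht]
    push_cast
    rfl
  have htpos : 0 < t := by
    have : X.trace.re = t := by rw [htX, Complex.ofReal_re]
    linarith [hXtr, this.symm.le]
  -- the shift equivalences
  set e : Fin d → (Fin d ≃ Fin d) := fun i => Equiv.addRight i with he
  set U : Fin d → Matrix (Fin d) (Fin d) ℂ :=
    fun i => (1 : Matrix (Fin d) (Fin d) ℂ).submatrix ⇑(e i) id * Vᴴ with hU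
  set M : Fin d → Matrix (Fin d) (Fin d) ℂ :=
    fun i => Matrix.diagonal (fun j => ((t⁻¹ * lam ((e i) j) : ℝ) : ℂ)) with hM
  have hUmem : ∀ i, U i ∈ Matrix.unitaryGroup (Fin d) ℂ := by
    intro i
    refine mul_mem (perm_unitary (e i)) ?_
    rw [← Matrix.star_eq_conjTranspose]
    exact Unitary.star_mem hH.eigenvectorUnitary.2
  have hMpsd : ∀ i, (M i).PosSemidef := by
    intro i
    refine Matrix.PosSemidef.diagonal ?_
    intro j
    rw [Pi.zero_apply]
    rw [Complex.zero_le_real]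
    exact mul_nonneg (inv_nonneg.2 htpos.le) (hlam0 _)
  have hMsum : ∑ i, M i = 1 := by
    ext j k
    rw [Matrix.sum_apply]
    by_cases hjk : j = k
    · subst hjk
      simp only [hM, Matrix.diagonal_apply_eq, Matrix.one_apply_eq]
      rw [← Complex.ofReal_sum, ← Finset.mul_sum]
      have : ∑ i, lam ((e i) j) = t := by
        rw [ht]
        have : ∀ i, (e i) j = (Equiv.addLeft j) i := by
          intro i
          simp [he, Equiv.addRight, Equiv.addLeft, add_comm]
        simp only [this]
        exact Equiv.sum_comp (Equiv.addLeft j) lam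
      rw [this, inv_mul_cancel₀ htpos.ne']
      simp
    · simp only [hM, Matrix.diagonal_apply_ne _ hjk, Matrix.one_apply_ne hjk]
      simp
  refine ⟨U, hUmem, M, hMpsd, hMsum, ?_⟩
  -- key conjugation identity
  have hUMU : ∀ i, (U i)ᴴ * M i * U i = ((t⁻¹ : ℝ) : ℂ) • X := by
    intro i
    have hUi : (U i)ᴴ = V * ((1 : Matrix (Fin d) (Fin d) ℂ).submatrix ⇑(e i) id)ᴴ := by
      rw [hU]
      simp only []
      rw [Matrix.conjTranspose_mul, Matrix.conjTranspose_conjTranspose]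
    rw [hUi, hU]
    simp only []
    have assoc1 : V * ((1 : Matrix (Fin d) (Fin d) ℂ).submatrix ⇑(e i) id)ᴴ * M i *
        ((1 : Matrix (Fin d) (Fin d) ℂ).submatrix ⇑(e i) id * Vᴴ)
        = V * ((((1 : Matrix (Fin d) (Fin d) ℂ).submatrix ⇑(e i) id)ᴴ * M i *
          ((1 : Matrix (Fin d) (Fin d) ℂ).submatrix ⇑(e i) id)) * Vᴴ) := by
      simp only [Matrix.mul_assoc]
    rw [assoc1, perm_conj]
    have hsub : (M i).submatrix ⇑(e i).symm ⇑(e i).symm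
        = ((t⁻¹ : ℝ) : ℂ) • Matrix.diagonal (RCLike.ofReal ∘ lam) := by
      rw [hM]
      simp only []
      rw [_root_.diag_submatrix]
      ext a b
      by_cases hab : a = b
      · subst hab
        simp only [Matrix.diagonal_apply_eq, Function.comp_apply, Matrix.smul_apply,
          Matrix.diagonal_apply_eq, Equiv.apply_symm_apply, smul_eq_mul]
        push_cast
        rfl
      · simp [Matrix.diagonal_apply_ne _ hab, hab]
    rw [hsub, Matrix.smul_mul, Matrix.mul_smul, ← Matrix.mul_assoc, ← hXdiag]
  -- trace identity
  have htrace : ∀ (i : Fin d) (η : Matrix (Fin d) (Fin d) ℂ),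
      (M i * (((d : ℂ)⁻¹) • (U i * η * (U i)ᴴ))).trace
        = (d : ℂ)⁻¹ * (((t⁻¹ : ℝ) : ℂ) * (X * η).trace) := by
    intro i η
    rw [mul_smul_comm, Matrix.trace_smul, smul_eq_mul]
    congr 1
    have h1 : M i * (U i * η * (U i)ᴴ) = (M i * U i) * η * (U i)ᴴ := by
      simp only [Matrix.mul_assoc]
    rw [h1, Matrix.trace_mul_cycle, ← Matrix.mul_assoc, hUMU i, Matrix.smul_mul,
      Matrix.trace_smul, smul_eq_mul]
  have hp : ∀ η : Matrix (Fin d) (Fin d) ℂ,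
      (∑ i, (M i * (((d : ℂ)⁻¹) • (U i * η * (U i)ᴴ))).trace.re)
        = t⁻¹ * ((X * η).trace.re) := by
    intro η
    have hterm : ∀ i : Fin d, (M i * (((d : ℂ)⁻¹) • (U i * η * (U i)ᴴ))).trace.re
        = (d : ℝ)⁻¹ * (t⁻¹ * ((X * η).trace.re)) := by
      intro i
      rw [htrace i η]
      rw [show ((d : ℂ))⁻¹ = (((d : ℝ)⁻¹ : ℝ) : ℂ) by push_cast; ring]
      rw [Complex.re_ofReal_mul, Complex.re_ofReal_mul]
    simp only [hterm]
    rw [Finset.sum_const, Finset.card_univ, Fintype.card_fin, nsmul_eq_mul]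
    rw [← mul_assoc, mul_inv_cancel₀ (by exact_mod_cast hd.ne' : (d:ℝ) ≠ 0), one_mul]
  -- final inequality
  show (1 + genRobustness F ρ) *
      sSup ((fun η => ∑ i, (M i * (((d : ℂ)⁻¹) • (U i * η * (U i)ᴴ))).trace.re) '' F)
    ≤ ∑ i, (M i * (((d : ℂ)⁻¹) • (U i * ρ * (U i)ᴴ))).trace.re
  set R := genRobustness F ρ with hR
  have hR0 : 0 ≤ R := le_csInf hfin (fun s hs => hs.1)
  have hR1 : 0 < 1 + R := by linarith
  have hub : ∀ y ∈ (fun η => ∑ i, (M i * (((d : ℂ)⁻¹) • (U i * η * (U i)ᴴ))).trace.re) '' F,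
      y ≤ (t⁻¹ * ((X * ρ).trace.re)) / (1 + R) := by
    rintro y ⟨σ, hσF, rfl⟩
    dsimp only
    rw [hp σ]
    rw [le_div_iff₀ hR1]
    have := hXineq σ hσF
    have htinv : 0 ≤ t⁻¹ := by positivity
    nlinarith
  have hne : ((fun η => ∑ i, (M i * (((d : ℂ)⁻¹) • (U i * η * (U i)ᴴ))).trace.re) '' F).Nonempty :=
    ⟨_, ⟨σ₀, hσ₀F, rfl⟩⟩
  have hsup := csSup_le hne hub
  rw [hp ρ]
  calc (1 + R) * sSup ((fun η => ∑ i, (M i * (((d : ℂ)⁻¹) • (U i * η * (U i)ᴴ))).trace.re) '' F)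
      ≤ (1 + R) * ((t⁻¹ * ((X * ρ).trace.re)) / (1 + R)) :=
        mul_le_mul_of_nonneg_left hsup hR1.le
    _ = t⁻¹ * ((X * ρ).trace.re) := by
        rw [mul_comm, div_mul_cancel₀ _ hR1.ne']
end
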